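/- arXiv:math/0507197 — 2 statements merged into one kernel-verified Lean document; each statement's English description precedes it below -/
import Mathlib

section
/- Let n be a positive even integer, let q be the discriminant quadratic form of the lattice ⟨2⟩⊕⟨−n⟩, and let q₂ be its restriction to the 2-primary component of the discriminant group. Then the group O(q₂) of automorphisms of the 2-primary component preserving q₂ has order 1 if n ≡ 2 mod 8, order 4 (isomorphic to (ℤ/2ℤ)²) if n ≡ 0 mod 16, and order 2 in all remaining cases (n ≡ 4 mod 8, n ≡ 6 mod 8, or n ≡ 8 mod 16). -/
open Matrix

/-- An integral lattice: a free `ℤ`-module `Fin rank → ℤ` equipped with a symmetric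
integer Gram matrix. -/
structure IntLattice where
  rank : ℕ
  gram : Matrix (Fin rank) (Fin rank) ℤ
  symm : gram.IsSymm

namespace IntLattice

/-- The bilinear form of the lattice. -/
def bilin (L : IntLattice) (x y : Fin L.rank → ℤ) : ℤ := x ⬝ᵥ (L.gram *ᵥ y)

lemma gram_symm_apply (L : IntLattice) (i j : Fin L.rank) : L.gram j i = L.gram i j :=
  congrFun (congrFun L.symm i) j

lemma bilin_comm (L : IntLattice) (x y : Fin L.rank → ℤ) :
    L.bilin x y = L.bilin y x := by
  simp only [bilin, dotProduct, mulVec, Finset.mul_sum]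
  rw [Finset.sum_comm]
  exact Finset.sum_congr rfl fun j _ => Finset.sum_congr rfl fun i _ => by
    rw [L.gram_symm_apply i j]; ring

/-- The lattice is even: all norms are even. -/
def IsEven (L : IntLattice) : Prop := ∀ x, 2 ∣ L.bilin x x

/-- The lattice is unimodular: the Gram matrix has determinant `±1`, equivalently the
map `L → Hom(L,ℤ)` is bijective. -/
def IsUnimodular (L : IntLattice) : Prop := IsUnit L.gram.det

/-- Positive definite lattice. -/
def PosDef (L : IntLattice) : Prop := ∀ x, x ≠ 0 → 0 < L.bilin x x

/-- The real quadratic form of the lattice has `p` positive and `q` negative squares. -/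
def HasSignature (L : IntLattice) (p q : ℕ) : Prop :=
  L.rank = p + q ∧
  ∃ Q : Matrix (Fin L.rank) (Fin L.rank) ℝ, IsUnit Q.det ∧
    Qᵀ * (L.gram.map ((↑) : ℤ → ℝ)) * Q =
      Matrix.diagonal (fun i : Fin L.rank => if (i : ℕ) < p then (1 : ℝ) else -1)

/-- The rational extension of the bilinear form. -/
def qbilin (L : IntLattice) (x y : Fin L.rank → ℚ) : ℚ :=
  x ⬝ᵥ ((L.gram.map ((↑) : ℤ → ℚ)) *ᵥ y)

end IntLattice

def castVec {N : ℕ} (x : Fin N → ℤ) : Fin N → ℚ := fun i => (x i : ℚ)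

def castHom (N : ℕ) : (Fin N → ℤ) →+ (Fin N → ℚ) where
  toFun := castVec
  map_zero' := by funext i; simp [castVec]
  map_add' a b := by funext i; simp [castVec]

namespace IntLattice

/-- The dual lattice `L∨ = {x ∈ L⊗ℚ : ⟨x,L⟩ ⊆ ℤ}`, as an additive subgroup of `ℚ^rank`. -/
def dualSub (L : IntLattice) : AddSubgroup (Fin L.rank → ℚ) where
  carrier := {x | ∀ y : Fin L.rank → ℤ, ∃ m : ℤ, L.qbilin x (castVec y) = m}
  add_mem' := by
    intro a b ha hb y
    obtain ⟨m, hm⟩ := ha y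
    obtain ⟨m', hm'⟩ := hb y
    refine ⟨m + m', ?_⟩
    simp only [qbilin, add_dotProduct] at *
    rw [hm, hm']; push_cast; ring
  zero_mem' := by
    intro y
    exact ⟨0, by simp [qbilin]⟩
  neg_mem' := by
    intro a ha y
    obtain ⟨m, hm⟩ := ha y
    refine ⟨-m, ?_⟩
    simp only [qbilin, neg_dotProduct] at *
    rw [hm]; push_cast; ring

/-- The image of `L` inside `L⊗ℚ`. -/
def latticeIn (L : IntLattice) : AddSubgroup (Fin L.rank → ℚ) := (castHom L.rank).range

/-- The discriminant group `A_L = L∨/L`. -/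
abbrev discGroup (L : IntLattice) : Type :=
  ↥(L.dualSub) ⧸ (L.latticeIn).addSubgroupOf L.dualSub

/-- Projection from the dual lattice to the discriminant group. -/
def dmk (L : IntLattice) : L.dualSub → L.discGroup := QuotientAddGroup.mk

/-- `g : A_M → A_N` carries the discriminant quadratic form `q_M` to `q_N`
(values in `ℚ/2ℤ`). -/
def QFormIso (M N : IntLattice) (g : M.discGroup ≃+ N.discGroup) : Prop :=
  ∀ x : M.dualSub, ∃ y : N.dualSub,
    N.dmk y = g (M.dmk x) ∧ ∃ m : ℤ, N.qbilin ↑y ↑y - M.qbilin ↑x ↑x = 2 * (m : ℚ)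

/-- `g : A_M → A_N` carries the discriminant quadratic form `q_M` to `-q_N`. -/
def QFormIsoNeg (M N : IntLattice) (g : M.discGroup ≃+ N.discGroup) : Prop :=
  ∀ x : M.dualSub, ∃ y : N.dualSub,
    N.dmk y = g (M.dmk x) ∧ ∃ m : ℤ, N.qbilin ↑y ↑y + M.qbilin ↑x ↑x = 2 * (m : ℚ)

/-- The integer matrix `F` defines an isometry `M → N` of lattices (`x ↦ F *ᵥ x`). -/
def MatIsometry (M N : IntLattice) (F : Matrix (Fin N.rank) (Fin M.rank) ℤ) : Prop :=
  (∃ F' : Matrix (Fin M.rank) (Fin N.rank) ℤ, F * F' = 1 ∧ F' * F = 1) ∧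
  Fᵀ * N.gram * F = M.gram

/-- The lattices `M` and `N` are isometric. -/
def Isometric (M N : IntLattice) : Prop := ∃ F, MatIsometry M N F

end IntLattice

/-- The rows of `B` form a `ℤ`-basis of the submodule `S`. -/
def IsBasisOf {N : ℕ} (S : Submodule ℤ (Fin N → ℤ)) {r : ℕ}
    (B : Matrix (Fin r) (Fin N) ℤ) : Prop :=
  (∀ i, B i ∈ S) ∧ ∀ x ∈ S, ∃! c : Fin r → ℤ, x = Matrix.vecMul c B

namespace IntLattice

/-- Gram matrix of the vectors given by the rows of `B`. -/
def gramOf (L : IntLattice) {r : ℕ} (B : Matrix (Fin r) (Fin L.rank) ℤ) :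
    Matrix (Fin r) (Fin r) ℤ := Matrix.of fun i j => L.bilin (B i) (B j)

lemma gramOf_isSymm (L : IntLattice) {r : ℕ} (B : Matrix (Fin r) (Fin L.rank) ℤ) :
    (L.gramOf B).IsSymm := by
  unfold Matrix.IsSymm
  ext i j
  simp only [transpose_apply, gramOf, Matrix.of_apply]
  exact L.bilin_comm _ _

/-- The sublattice of `L` spanned by the rows of `B`, as an abstract lattice. -/
def sub (L : IntLattice) {r : ℕ} (B : Matrix (Fin r) (Fin L.rank) ℤ) : IntLattice :=
  ⟨r, L.gramOf B, L.gramOf_isSymm B⟩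

/-- `M(1/2)`: the same module with the form divided by two. -/
abbrev halfL (M : IntLattice) : IntLattice :=
  ⟨M.rank, M.gram.map (fun z => z / 2), M.symm.map _⟩

end IntLattice

/-- Orthogonal direct sum of Gram matrices. -/
def dsumGram {m k : ℕ} (A : Matrix (Fin m) (Fin m) ℤ) (B : Matrix (Fin k) (Fin k) ℤ) :
    Matrix (Fin (m + k)) (Fin (m + k)) ℤ :=
  Matrix.of fun i j =>
    if hi : (i : ℕ) < m then
      if hj : (j : ℕ) < m then A ⟨i, hi⟩ ⟨j, hj⟩ else 0
    else
      if hj : (j : ℕ) < m then 0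
      else B ⟨(i : ℕ) - m, by omega⟩ ⟨(j : ℕ) - m, by omega⟩

lemma dsumGram_isSymm {m k : ℕ} {A : Matrix (Fin m) (Fin m) ℤ}
    {B : Matrix (Fin k) (Fin k) ℤ} (hA : A.IsSymm) (hB : B.IsSymm) :
    (dsumGram A B).IsSymm := by
  unfold Matrix.IsSymm
  ext i j
  simp only [transpose_apply, dsumGram, Matrix.of_apply]
  have hA' : ∀ a b, A b a = A a b := fun a b => congrFun (congrFun hA a) b
  have hB' : ∀ a b, B b a = B a b := fun a b => congrFun (congrFun hB a) b
  by_cases hi : (i : ℕ) < m <;> by_cases hj : (j : ℕ) < m <;> simp [hi, hj]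
  · exact hA' _ _
  · exact hB' _ _

/-- Orthogonal direct sum of lattices. -/
def IntLattice.dsum (M N : IntLattice) : IntLattice :=
  ⟨M.rank + N.rank, dsumGram M.gram N.gram, dsumGram_isSymm M.symm N.symm⟩

/-- The lattice with diagonal Gram matrix `diag d`. -/
def diagL {r : ℕ} (d : Fin r → ℤ) : IntLattice :=
  ⟨r, Matrix.diagonal d, Matrix.isSymm_diagonal d⟩

/-- The hyperbolic plane `U`. -/
def UL : IntLattice := ⟨2, Matrix.of !![0, 1; 1, 0], by decide⟩

/-- The negative definite even unimodular lattice `E₈` (negative of the `E₈` Cartan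
matrix; node `0` is the branch node with arms `1`, `2-3`, `4-5-6-7`). -/
def E8L : IntLattice :=
  ⟨8, !![-2,  1,  1,  0,  1,  0,  0,  0;
          1, -2,  0,  0,  0,  0,  0,  0;
          1,  0, -2,  1,  0,  0,  0,  0;
          0,  0,  1, -2,  0,  0,  0,  0;
          1,  0,  0,  0, -2,  1,  0,  0;
          0,  0,  0,  0,  1, -2,  1,  0;
          0,  0,  0,  0,  0,  1, -2,  1;
          0,  0,  0,  0,  0,  0,  1, -2], by decide⟩

/-- The rank-two lattice with Gram matrix `[[a,b],[b,d]]`. -/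
def sym2L (a b d : ℤ) : IntLattice :=
  ⟨2, !![a, b; b, d], by
    unfold Matrix.IsSymm
    ext i j
    fin_cases i <;> fin_cases j <;> simp⟩

/-- The `ε`-eigenspace of an involution `φ`. -/
def eigenSub {n : ℕ} (φ : (Fin n → ℤ) ≃ₗ[ℤ] (Fin n → ℤ)) (ε : ℤ) :
    Submodule ℤ (Fin n → ℤ) where
  carrier := {x | φ x = ε • x}
  add_mem' := by
    intro a b ha hb
    simp only [Set.mem_setOf_eq] at *
    rw [map_add, ha, hb, smul_add]
  zero_mem' := by simp
  smul_mem' := by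
    intro c x hx
    simp only [Set.mem_setOf_eq] at *
    rw [_root_.map_smul, hx, smul_comm]

/-- The orthogonal complement of a set of vectors in `L`. -/
def perpOfSet (L : IntLattice) (S : Set (Fin L.rank → ℤ)) :
    Submodule ℤ (Fin L.rank → ℤ) where
  carrier := {x | ∀ s ∈ S, L.bilin x s = 0}
  add_mem' := by
    intro a b ha hb s hs
    have ha' := ha s hs
    have hb' := hb s hs
    simp only [IntLattice.bilin] at ha' hb' ⊢
    rw [add_dotProduct, ha', hb', add_zero]
  zero_mem' := by
    intro s hs
    simp [IntLattice.bilin]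
  smul_mem' := by
    intro c x hx s hs
    have hx' := hx s hs
    simp only [IntLattice.bilin] at hx' ⊢
    rw [smul_dotProduct, hx', smul_zero]

/-- `P` is a primitive lattice vector. -/
def Primitive {n : ℕ} (P : Fin n → ℤ) : Prop :=
  P ≠ 0 ∧ ∀ (m : ℤ) (y : Fin n → ℤ), P = m • y → IsUnit m

/-- An integral polarized K3 involution `(L, φ, P′)`: `L` is an even unimodular lattice
of signature `(3,19)`, `φ` a form-preserving involution with hyperbolic fixed lattice,
and `P′` a polarization with `φ(P′) = -P′` and `(P′)² > 0`. -/
structure K3Inv where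
  L : IntLattice
  even : L.IsEven
  unimod : L.IsUnimodular
  sig : L.HasSignature 3 19
  φ : (Fin L.rank → ℤ) ≃ₗ[ℤ] (Fin L.rank → ℤ)
  φ_isom : ∀ x y, L.bilin (φ x) (φ y) = L.bilin x y
  φ_invol : ∀ x, φ (φ x) = x
  P' : Fin L.rank → ℤ
  φP' : φ P' = -P'
  P'pos : 0 < L.bilin P' P'
  fixed_hyp : ∃ (r : ℕ) (B : Matrix (Fin r) (Fin L.rank) ℤ),
    IsBasisOf (eigenSub φ 1) B ∧ (L.sub B).HasSignature 1 (r - 1)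

/-- Isomorphism of integral polarized K3 involutions. -/
def K3Iso (K K' : K3Inv) : Prop :=
  ∃ f : (Fin K.L.rank → ℤ) ≃ₗ[ℤ] (Fin K'.L.rank → ℤ),
    (∀ x y, K'.L.bilin (f x) (f y) = K.L.bilin x y) ∧
    f K.P' = K'.P' ∧
    ∀ x, K'.φ (f x) = f (K.φ x)

/-- `(L,φ,P′)` has genus invariants `(r, a, δ_φ; k, n, δ_P, δ_{φP})`. -/
def HasGenusInvariants (K : K3Inv) (r a δφ k : ℕ) (n : ℤ) (δP δφP : ℕ) : Prop :=
  (δφ = 0 ∨ δφ = 1) ∧ (δP = 0 ∨ δP = 1) ∧ (δφP = 0 ∨ δφP = 1) ∧ 1 ≤ k ∧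
  (∃ B : Matrix (Fin r) (Fin K.L.rank) ℤ,
      IsBasisOf (eigenSub K.φ 1) B ∧
      Nonempty ((K.L.sub B).discGroup ≃+ (Fin a → ZMod 2))) ∧
  (δφ = 0 ↔ ∀ x, 2 ∣ K.L.bilin x (K.φ x)) ∧
  ∃ P : Fin K.L.rank → ℤ, Primitive P ∧ K.P' = (k : ℤ) • P ∧ n = K.L.bilin P P ∧
    (δP = 0 ↔ ∀ y ∈ eigenSub K.φ (-1), 2 ∣ K.L.bilin P y) ∧
    (δφP = 0 ↔ ∀ x, 2 ∣ (K.L.bilin x (K.φ x) - K.L.bilin x P))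

/-- Two even lattices belong to the same genus: equal signatures over `ℝ` and
isomorphic discriminant quadratic forms. -/
def SameGenus (M N : IntLattice) : Prop :=
  (∃ p q, M.HasSignature p q ∧ N.HasSignature p q) ∧
  ∃ g : M.discGroup ≃+ N.discGroup, IntLattice.QFormIso M N g

/-- The `p`-primary part of an abelian group. -/
def primaryPart (p : ℕ) (G : Type*) [AddCommGroup G] : AddSubgroup G where
  carrier := {x | ∃ j : ℕ, p ^ j • x = 0}
  add_mem' := by
    rintro a b ⟨j, hj⟩ ⟨l, hl⟩
    refine ⟨j + l, ?_⟩
    rw [smul_add]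
    have h1 : p ^ (j + l) • a = 0 := by rw [pow_add, mul_comm, SemigroupAction.mul_smul, hj, smul_zero]
    have h2 : p ^ (j + l) • b = 0 := by rw [pow_add, SemigroupAction.mul_smul, hl, smul_zero]
    rw [h1, h2, add_zero]
  zero_mem' := ⟨0, smul_zero _⟩
  neg_mem' := by
    rintro a ⟨j, hj⟩
    exact ⟨j, by rw [smul_neg, hj, neg_zero]⟩

/-- A pair `(M, τ)`: an even lattice `M` in the genus of the reference lattice `R`
together with an isomorphism `τ : q_M → q_R` of discriminant quadratic forms. -/
structure QPairR (R : IntLattice) where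
  M : IntLattice
  even : M.IsEven
  genus : SameGenus M R
  τ : M.discGroup ≃+ R.discGroup
  hτ : IntLattice.QFormIso M R τ

/-- Equivalence of pairs: `(M,τ) ∼ (M̃,τ̃)` iff there is an isometry `f : M → M̃`
with `τ = τ̃ ∘ f̄`, where `f̄` is the induced map on discriminant groups. -/
def QPairREquiv {R : IntLattice} (p p' : QPairR R) : Prop :=
  ∃ F : Matrix (Fin p'.M.rank) (Fin p.M.rank) ℤ,
    IntLattice.MatIsometry p.M p'.M F ∧
    ∀ (x : p.M.dualSub) (y : p'.M.dualSub),
      (y : Fin p'.M.rank → ℚ) = (F.map ((↑) : ℤ → ℚ)) *ᵥ (x : Fin p.M.rank → ℚ) →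
      p.τ (p.M.dmk x) = p'.τ (p'.M.dmk y)

/-- `τ` is an isomorphism from the discriminant bilinear form of `M(1/2)` to the
standard form `b_{⟨-n/2⟩}` on `ℤ/(n/2)`, which sends `(x̄,ȳ)` to `-2xy/n mod ℤ`. -/
def BIsoStd (M : IntLattice) (n : ℤ) (τ : (M.halfL).discGroup ≃+ ZMod (n / 2).toNat) :
    Prop :=
  ∀ (x y : (M.halfL).dualSub) (α β : ℤ),
    ((α : ZMod (n / 2).toNat) = τ ((M.halfL).dmk x)) →
    ((β : ZMod (n / 2).toNat) = τ ((M.halfL).dmk y)) →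
    ∃ m : ℤ, (M.halfL).qbilin ↑x ↑y + (2 * α * β : ℚ) / (n : ℚ) = (m : ℚ)

/-- A pair `(M, τ)`: an even lattice `M` in the genus of the reference lattice `R`
together with an isomorphism `τ : b_{M(1/2)} → b_{⟨-n/2⟩}` of discriminant bilinear
forms. -/
structure BPairR (R : IntLattice) (n : ℤ) where
  M : IntLattice
  even : M.IsEven
  genus : SameGenus M R
  τ : (M.halfL).discGroup ≃+ ZMod (n / 2).toNat
  hτ : BIsoStd M n τ

/-- Equivalence of pairs `(M,τ) ∼ (M̃,τ̃)`: there is an isometry `f : M → M̃` with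
`τ = τ̃ ∘ f̄`. -/
def BPairREquiv {R : IntLattice} {n : ℤ} (p p' : BPairR R n) : Prop :=
  ∃ F : Matrix (Fin p'.M.rank) (Fin p.M.rank) ℤ,
    IntLattice.MatIsometry p.M p'.M F ∧
    ∀ (x : (p.M.halfL).dualSub) (y : (p'.M.halfL).dualSub),
      (y : Fin p'.M.rank → ℚ) = (F.map ((↑) : ℤ → ℚ)) *ᵥ (x : Fin p.M.rank → ℚ) →
      p.τ ((p.M.halfL).dmk x) = p'.τ ((p'.M.halfL).dmk y)

/-- `g` is an isomorphism `b_{⟨n/2⟩} → -b_{⟨n/2⟩}` of finite bilinear forms on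
`ℤ/(n/2)`, where `b_{⟨n/2⟩}(x̄,ȳ) = 2xy/n mod ℤ`. -/
def NegBIso (n : ℤ) (g : ZMod (n / 2).toNat ≃+ ZMod (n / 2).toNat) : Prop :=
  ∀ x y x' y' : ℤ,
    ((x' : ZMod (n / 2).toNat) = g ((x : ℤ) : ZMod (n / 2).toNat)) →
    ((y' : ZMod (n / 2).toNat) = g ((y : ℤ) : ZMod (n / 2).toNat)) →
    n ∣ 2 * (x' * y' + x * y)

/-- `g` preserves the restriction to the 2-primary part of the discriminant quadratic
form `q(x̄,ȳ) = x²/2 - y²/n mod 2ℤ` of `⟨2⟩⊕⟨-n⟩` on `ℤ/2 × ℤ/n`. -/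
def QPres2 (n : ℤ)
    (g : primaryPart 2 (ZMod 2 × ZMod n.toNat) ≃+ primaryPart 2 (ZMod 2 × ZMod n.toNat)) :
    Prop :=
  ∀ (x : primaryPart 2 (ZMod 2 × ZMod n.toNat)) (α β α' β' : ℤ),
    ((α : ZMod 2) = (x : ZMod 2 × ZMod n.toNat).1) →
    ((β : ZMod n.toNat) = (x : ZMod 2 × ZMod n.toNat).2) →
    ((α' : ZMod 2) = ((g x : primaryPart 2 (ZMod 2 × ZMod n.toNat)) : ZMod 2 × ZMod n.toNat).1) →
    ((β' : ZMod n.toNat) = ((g x : primaryPart 2 (ZMod 2 × ZMod n.toNat)) : ZMod 2 × ZMod n.toNat).2) →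
    (4 * n) ∣ (n * (α' ^ 2 - α ^ 2) - 2 * (β' ^ 2 - β ^ 2))

/-- `g` preserves the restriction to the 2-primary part of the discriminant bilinear
form `b(x̄,ȳ) = -2xy/n mod ℤ` of `⟨-n/2⟩` on `ℤ/(n/2)`. -/
def BPres2 (n : ℤ)
    (g : primaryPart 2 (ZMod (n / 2).toNat) ≃+ primaryPart 2 (ZMod (n / 2).toNat)) :
    Prop :=
  ∀ (x y : primaryPart 2 (ZMod (n / 2).toNat)) (α β α' β' : ℤ),
    ((α : ZMod (n / 2).toNat) = (x : ZMod (n / 2).toNat)) →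
    ((β : ZMod (n / 2).toNat) = (y : ZMod (n / 2).toNat)) →
    ((α' : ZMod (n / 2).toNat) = ((g x : primaryPart 2 (ZMod (n / 2).toNat)) : ZMod (n / 2).toNat)) →
    ((β' : ZMod (n / 2).toNat) = ((g y : primaryPart 2 (ZMod (n / 2).toNat)) : ZMod (n / 2).toNat)) →
    n ∣ 2 * (α' * β' - α * β)

/-!
Write `n = 2^k m` with `m` odd. The map `(a, s) ↦ (a, m s)` identifies `ℤ/2 × ℤ/2^k` with the
`2`-primary part of `ℤ/2 × ℤ/n`, and `q₂` with `q(a, s) = a²/2 - m s²/2^k`. An isometry is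
determined by the images `x`, `y` of the generators `e = (1, 0)`, `f = (0, 1)`; conversely, since
`q` is nondegenerate, every pair with `2x = 0`, `q x = q e`, `q y = q f`, `q (x + y) = q (e + f)`
(a frame) comes from an isometry. Solving these congruences: for `k = 1` they only see `m mod 4`
and leave the identity, plus the swap `e ↔ f` when `m ≡ 3 mod 4`. For `k ≥ 2` either `x = e`
and `y = ±f`, or `x = (1, 2^(k-1))` and `y = (1, z)` with `m (z² - 1) ≡ 2^(k-1) mod 2^(k+1)`;
the latter congruence is solvable only for `k ≥ 4`, and then its solutions are `z ≡ ±t mod 2^k`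
for any one solution `t`.
Every isometry found this way is an involution.
-/

lemma two_mul_dvd_sq_sub_sq {d a b : ℤ} (hd : 2 ∣ d) (h : d ∣ a - b) :
    2 * d ∣ a ^ 2 - b ^ 2 := by
  obtain ⟨c, hc⟩ := h
  obtain ⟨d', rfl⟩ := hd
  exact ⟨c * (b + d' * c), by linear_combination (a + b + 2 * d' * c) * hc⟩

lemma pow_dvd_sub_or_pow_dvd_add_of_dvd_sq_sub_sq {j : ℕ} {z t : ℤ} (ht : Odd t)
    (h : 2 ^ (j + 1) ∣ z ^ 2 - t ^ 2) : 2 ^ j ∣ z - t ∨ 2 ^ j ∣ z + t := by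
  obtain _ | i := j
  · simp
  have hzt : Even (z - t) := by
    have h2 : Even (z ^ 2 - t ^ 2) := even_iff_two_dvd.mpr ((dvd_pow_self 2 (by omega)).trans h)
    simp only [Int.even_sub, Int.even_pow' two_ne_zero] at h2 ⊢
    exact h2
  obtain ⟨a, ha⟩ := hzt
  obtain rfl : z = t + 2 * a := by linear_combination ha
  -- `z² - t² = 4 a (a + t)`, and exactly one of `a`, `a + t` is odd
  have hdvd : 2 ^ i ∣ a * (a + t) := by
    rw [← mul_dvd_mul_iff_left (four_ne_zero : (4 : ℤ) ≠ 0)]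
    rwa [show (2 : ℤ) ^ (i + 1 + 1) = 4 * 2 ^ i by ring,
      show (t + 2 * a) ^ 2 - t ^ 2 = 4 * (a * (a + t)) by ring] at h
  rcases Int.even_or_odd a with ha | ha
  · have hco := (Int.isCoprime_two_left.mpr (ha.add_odd ht)).pow_left (m := i)
    left
    rw [show t + 2 * a - t = 2 * a by ring, pow_succ']
    exact mul_dvd_mul_left 2 (hco.dvd_of_dvd_mul_right hdvd)
  · have hco := (Int.isCoprime_two_left.mpr ha).pow_left (m := i)
    right
    rw [show t + 2 * a + t = 2 * (a + t) by ring, pow_succ']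
    exact mul_dvd_mul_left 2 (hco.dvd_of_dvd_mul_left hdvd)

lemma odd_of_dvd_mul_sq_sub_one {m z : ℤ} (h : 2 ∣ m * (z ^ 2 - 1)) (hm : Odd m) : Odd z := by
  have h2 : Even (m * (z ^ 2 - 1)) := even_iff_two_dvd.mpr h
  simpa [Int.even_mul, Int.even_sub, Int.even_pow' two_ne_zero, Int.odd_pow' two_ne_zero,
    Int.not_even_iff_odd.mpr hm] using h2

lemma isCoprime_two_pow_of_odd {m : ℕ} (hm : Odd m) (i : ℕ) : IsCoprime ((2 : ℤ) ^ i) m :=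
  (Int.isCoprime_two_left.mpr (Int.odd_coe_nat m |>.mpr hm)).pow_left

lemma four_mul_dvd_iff {k : ℕ} {m n α β α' β' a s a' s' : ℤ} (hk : k ≠ 0) (hm : m ≠ 0)
    (hn : n = 2 ^ k * m) (hα : 2 ∣ α - a) (hα' : 2 ∣ α' - a') (hβ : n ∣ β - m * s)
    (hβ' : n ∣ β' - m * s') :
    4 * n ∣ n * (α' ^ 2 - α ^ 2) - 2 * (β' ^ 2 - β ^ 2) ↔
      2 ^ (k + 2) ∣ (2 ^ k * a' ^ 2 - 2 * m * s' ^ 2) - (2 ^ k * a ^ 2 - 2 * m * s ^ 2) := by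
  have hn2 : 2 ∣ n := hn ▸ (dvd_pow_self 2 hk).mul_right m
  have hα2 : 4 * n ∣ n * (α ^ 2 - a ^ 2) :=
    mul_comm n 4 ▸ mul_dvd_mul_left n (two_mul_dvd_sq_sub_sq dvd_rfl hα)
  have hα2' : 4 * n ∣ n * (α' ^ 2 - a' ^ 2) :=
    mul_comm n 4 ▸ mul_dvd_mul_left n (two_mul_dvd_sq_sub_sq dvd_rfl hα')
  have hβ2 : 4 * n ∣ 2 * (β ^ 2 - (m * s) ^ 2) :=
    (show 2 * (2 * n) = 4 * n by ring) ▸ mul_dvd_mul_left 2 (two_mul_dvd_sq_sub_sq hn2 hβ)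
  have hβ2' : 4 * n ∣ 2 * (β' ^ 2 - (m * s') ^ 2) :=
    (show 2 * (2 * n) = 4 * n by ring) ▸ mul_dvd_mul_left 2 (two_mul_dvd_sq_sub_sq hn2 hβ')
  rw [dvd_iff_dvd_of_dvd_sub ((dvd_add (dvd_sub (dvd_sub hα2' hα2) hβ2') hβ2).trans
    (dvd_of_eq (by ring : _ = _ - (n * (a' ^ 2 - a ^ 2) - 2 * ((m * s') ^ 2 - (m * s) ^ 2))))),
    hn, show 4 * (2 ^ k * m) = m * 2 ^ (k + 2) by ring, show 2 ^ k * m * (a' ^ 2 - a ^ 2) -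
      2 * ((m * s') ^ 2 - (m * s) ^ 2) = m * ((2 ^ k * a' ^ 2 - 2 * m * s' ^ 2) -
        (2 ^ k * a ^ 2 - 2 * m * s ^ 2)) by ring, mul_dvd_mul_iff_left hm]

lemma two_dvd_iff_two_mul_intCast_eq_zero (x : ℤ) : 2 ∣ x ↔ 2 * (x : ZMod 4) = 0 := by
  rw [show (2 : ZMod 4) * x = ((2 * x : ℤ) : ZMod 4) by push_cast; rfl,
    ZMod.intCast_zmod_eq_zero_iff_dvd, Nat.cast_ofNat, show (4 : ℤ) = 2 * 2 by rfl,
    mul_dvd_mul_iff_left two_ne_zero]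

lemma Nat.card_subtype_eq_finset_card {α : Type*} [Fintype α] {P : α → Prop} (s : Finset α)
    (h : ∀ a, P a ↔ a ∈ s) : Nat.card {a // P a} = s.card := by
  rw [Nat.card_congr (Equiv.subtypeEquivRight h), Nat.card_eq_fintype_card, Fintype.card_coe]

/-- With `k = j + 2`: the `z` for which `(1, z)` is the image of `(0, 1)` under an isometry of
`discQ` moving `(1, 0)`. -/
def IsTwistRoot (j m : ℕ) (z : ℤ) : Prop := 2 ^ (j + 3) ∣ m * (z ^ 2 - 1) - 2 ^ (j + 1)

namespace IsTwistRoot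

variable {j m : ℕ} {z t : ℤ}

lemma odd (hm : Odd m) (hz : IsTwistRoot j m z) : Odd z := by
  refine odd_of_dvd_mul_sq_sub_one ?_ (Int.odd_coe_nat m |>.mpr hm)
  have h2 := dvd_trans (⟨2 ^ (j + 2), by ring⟩ : (2 : ℤ) ∣ 2 ^ (j + 3)) hz
  simpa using dvd_add h2 (⟨2 ^ j, by ring⟩ : (2 : ℤ) ∣ 2 ^ (j + 1))

lemma two_le (hm : Odd m) (hz : IsTwistRoot j m z) : 2 ≤ j := by
  have h8 : (8 : ℤ) ∣ m * (z ^ 2 - 1) :=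
    (Int.eight_dvd_sq_sub_one_of_odd (hz.odd hm)).mul_left _
  have h : (2 : ℤ) ^ 3 ∣ 2 ^ (j + 1) := by
    have := dvd_sub h8 (dvd_trans ⟨2 ^ j, by ring⟩ hz)
    simpa using this
  have := (pow_dvd_pow_iff two_ne_zero (by norm_num [Int.isUnit_iff])).mp h
  omega

lemma dvd_sub_or_dvd_add (hm : Odd m) (hz : IsTwistRoot j m z) (ht : IsTwistRoot j m t) :
    2 ^ (j + 2) ∣ z - t ∨ 2 ^ (j + 2) ∣ z + t := by
  refine pow_dvd_sub_or_pow_dvd_add_of_dvd_sq_sub_sq (ht.odd hm) ?_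
  refine (isCoprime_two_pow_of_odd hm _).dvd_of_dvd_mul_left ?_
  simpa [mul_sub] using dvd_sub hz ht

lemma neg (ht : IsTwistRoot j m t) : IsTwistRoot j m (-t) := by
  rwa [IsTwistRoot, neg_sq]

lemma dvd_sq_sub_one_add (hm : Odd m) (hz : IsTwistRoot j m z) :
    2 ^ (j + 2) ∣ z ^ 2 - 1 + 2 ^ (j + 1) := by
  obtain ⟨d, hd⟩ := hz
  refine (isCoprime_two_pow_of_odd hm _).dvd_of_dvd_mul_left ?_
  obtain ⟨a, rfl⟩ := hm
  refine ⟨2 * d + a + 1, ?_⟩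
  push_cast at hd ⊢
  linear_combination hd

end IsTwistRoot

/-- The root is `t = 1 + 2^j c` with `c = m - 2^(j-1)` odd: then
`m (t² - 1) = 2^(j+1) m² + 2^(2j) m (c² - 1)`, and `8` divides both `m² - 1` and `c² - 1`. -/
lemma exists_isTwistRoot {j m : ℕ} (hj : 2 ≤ j) (hm : Odd m) : ∃ t, IsTwistRoot j m t := by
  obtain ⟨i, rfl⟩ : ∃ i, j = i + 2 := ⟨j - 2, by omega⟩
  obtain ⟨a, rfl⟩ := hm
  refine ⟨1 + 2 ^ (i + 2) * ((2 * a + 1 : ℕ) - 2 ^ (i + 1)), ?_⟩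
  refine ⟨a * (a + 1) + 2 ^ (i + 1) * (2 * a + 1) * ((a - 2 ^ i) * (a - 2 ^ i + 1)), ?_⟩
  push_cast
  ring

/-- The frame conditions on integer lifts `(u, v)`, `(w, z)`, see `isFrame_mkV_iff`. -/
def IsIntFrame (k m : ℕ) (u v w z : ℤ) : Prop :=
  2 ^ k ∣ 2 * v ∧ 2 ^ (k + 2) ∣ 2 ^ k * (u ^ 2 - 1) - 2 * m * v ^ 2 ∧
    2 ^ (k + 2) ∣ 2 ^ k * w ^ 2 - 2 * m * (z ^ 2 - 1) ∧
    2 ^ (k + 2) ∣ 2 ^ k * ((u + w) ^ 2 - 1) - 2 * m * ((v + z) ^ 2 - 1)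

namespace IsIntFrame

variable {j m : ℕ} {u v w z : ℤ}

lemma exists_eq_two_pow_mul (h : IsIntFrame (j + 2) m u v w z) : ∃ c, v = 2 ^ (j + 1) * c := by
  obtain ⟨c, hc⟩ := h.1
  exact ⟨c, mul_left_cancel₀ two_ne_zero (by linear_combination hc)⟩

lemma odd_u (h : IsIntFrame (j + 2) m u v w z) : Odd u := by
  obtain ⟨c, rfl⟩ := h.exists_eq_two_pow_mul
  have h4 : 4 ∣ u ^ 2 - 1 - 2 * (m * 2 ^ j * c ^ 2) := by
    rw [← mul_dvd_mul_iff_left (pow_ne_zero (j + 2) two_ne_zero : (2 : ℤ) ^ (j + 2) ≠ 0)]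
    have h2 := h.2.1
    rwa [show (2 : ℤ) ^ (j + 2 + 2) = 2 ^ (j + 2) * 4 by ring,
      show (2 : ℤ) ^ (j + 2) * (u ^ 2 - 1) - 2 * m * (2 ^ (j + 1) * c) ^ 2 =
        2 ^ (j + 2) * (u ^ 2 - 1 - 2 * (m * 2 ^ j * c ^ 2)) by ring] at h2
  have h2 : Even (u ^ 2 - 1 - 2 * (m * 2 ^ j * c ^ 2)) :=
    even_iff_two_dvd.mpr ((by norm_num : (2 : ℤ) ∣ 4).trans h4)
  simpa [Int.even_sub, Int.even_pow, parity_simps] using h2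

lemma odd_z (hm : Odd m) (h : IsIntFrame (j + 2) m u v w z) : Odd z := by
  refine odd_of_dvd_mul_sq_sub_one ?_ (Int.odd_coe_nat m |>.mpr hm)
  have h4 : (4 : ℤ) ∣ 2 ^ (j + 2) * w ^ 2 - 2 * m * (z ^ 2 - 1) :=
    dvd_trans ⟨2 ^ (j + 2), by ring⟩ h.2.2.1
  rw [← mul_dvd_mul_iff_left (two_ne_zero : (2 : ℤ) ≠ 0)]
  have h4' : (4 : ℤ) ∣ 2 ^ (j + 2) * w ^ 2 := ⟨2 ^ j * w ^ 2, by ring⟩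
  simpa [mul_assoc] using (dvd_sub h4' h4)

lemma even_w_iff (hm : Odd m) (h : IsIntFrame (j + 2) m u v w z) {c : ℤ}
    (hc : v = 2 ^ (j + 1) * c) : Even w ↔ Even c := by
  have hu := h.odd_u
  have hz := h.odd_z hm
  obtain ⟨-, hE, hF, hS⟩ := h
  subst hc
  -- the polar form `q(x + y) - q x - q y` at `x = (u, v)`, `y = (w, z)`
  have hB : 2 ^ (j + 3) * 2 ∣ 2 ^ (j + 3) * (u * w - m * c * z) := by
    have := dvd_sub (dvd_sub hS hE) hF
    rwa [show (2 : ℤ) ^ (j + 2 + 2) = 2 ^ (j + 3) * 2 by ring,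
      show (2 : ℤ) ^ (j + 2) * ((u + w) ^ 2 - 1) - 2 * m * ((2 ^ (j + 1) * c + z) ^ 2 - 1) -
        (2 ^ (j + 2) * (u ^ 2 - 1) - 2 * m * (2 ^ (j + 1) * c) ^ 2) -
        (2 ^ (j + 2) * w ^ 2 - 2 * m * (z ^ 2 - 1)) = 2 ^ (j + 3) * (u * w - m * c * z) by ring]
      at this
  have hE2 : Even (u * w - m * c * z) :=
    even_iff_two_dvd.mpr ((mul_dvd_mul_iff_left (by positivity)).mp hB)
  have hm' : Odd (m : ℤ) := Int.odd_coe_nat m |>.mpr hm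
  simp only [Int.even_sub, Int.even_mul, Int.not_even_iff_odd.mpr hu, Int.not_even_iff_odd.mpr hz,
    Int.not_even_iff_odd.mpr hm', false_or, or_false] at hE2
  exact hE2

lemma dvd_sq_sub_one_of_even (hm : Odd m) (h : IsIntFrame (j + 2) m u v w z) (hw : Even w) :
    2 ^ (j + 3) ∣ z ^ 2 - 1 := by
  obtain ⟨w', rfl⟩ := hw
  refine (isCoprime_two_pow_of_odd hm _).dvd_of_dvd_mul_left
    ((mul_dvd_mul_iff_left (two_ne_zero : (2 : ℤ) ≠ 0)).mp ?_)
  have := dvd_sub (⟨w' ^ 2, by ring⟩ : (2 : ℤ) ^ (j + 2 + 2) ∣ 2 ^ (j + 2) * (w' + w') ^ 2)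
    h.2.2.1
  rw [show (2 : ℤ) ^ (j + 2 + 2) = 2 * 2 ^ (j + 3) by ring] at this
  simpa [mul_assoc] using this

lemma isTwistRoot_of_odd (h : IsIntFrame (j + 2) m u v w z) (hw : Odd w) : IsTwistRoot j m z := by
  obtain ⟨d, hd⟩ := Int.eight_dvd_sq_sub_one_of_odd hw
  refine (mul_dvd_mul_iff_left (two_ne_zero : (2 : ℤ) ≠ 0)).mp ?_
  have h8 : (2 : ℤ) ^ (j + 2 + 2) ∣ 2 ^ (j + 2) * (w ^ 2 - 1) := ⟨2 * d, by rw [hd]; ring⟩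
  have := dvd_sub h8 h.2.2.1
  rw [show (2 : ℤ) ^ (j + 2 + 2) = 2 * 2 ^ (j + 3) by ring] at this
  convert this using 1
  ring

theorem classify (hm : Odd m) (h : IsIntFrame (j + 2) m u v w z) :
    Odd u ∧ Odd z ∧ ((Even w ∧ 2 ^ (j + 2) ∣ v ∧ 2 ^ (j + 3) ∣ z ^ 2 - 1) ∨
      (Odd w ∧ 2 ^ (j + 2) ∣ v - 2 ^ (j + 1) ∧ IsTwistRoot j m z)) := by
  refine ⟨h.odd_u, h.odd_z hm, ?_⟩
  obtain ⟨c, hc⟩ := h.exists_eq_two_pow_mul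
  rcases Int.even_or_odd w with hw | hw
  · obtain ⟨c', rfl⟩ := (h.even_w_iff hm hc).mp hw
    exact Or.inl ⟨hw, ⟨c', by rw [hc]; ring⟩, h.dvd_sq_sub_one_of_even hm hw⟩
  · obtain ⟨c', rfl⟩ : Odd c := Int.not_even_iff_odd.mp fun hc' =>
      Int.not_even_iff_odd.mpr hw ((h.even_w_iff hm hc).mpr hc')
    exact Or.inr ⟨hw, ⟨c', by rw [hc]; ring⟩, h.isTwistRoot_of_odd hw⟩

lemma intCast_zmod_four (h : IsIntFrame 1 m u v w z) :
    (u : ZMod 4) ^ 2 - 1 - m * (v : ZMod 4) ^ 2 = 0 ∧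
      (w : ZMod 4) ^ 2 - m * ((z : ZMod 4) ^ 2 - 1) = 0 ∧
      ((u : ZMod 4) + w) ^ 2 - 1 - m * (((v : ZMod 4) + z) ^ 2 - 1) = 0 := by
  obtain ⟨-, hE, hF, hS⟩ := h
  have key : ∀ x : ℤ, (2 : ℤ) ^ (1 + 2) ∣ 2 ^ 1 * x → (x : ZMod 4) = 0 := fun x hx =>
    (ZMod.intCast_zmod_eq_zero_iff_dvd x 4).mpr
      ((mul_dvd_mul_iff_left (two_ne_zero : (2 : ℤ) ≠ 0)).mp (by simpa [pow_succ] using hx))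
  refine ⟨?_, ?_, ?_⟩
  · have := key (u ^ 2 - 1 - m * v ^ 2) (by convert hE using 1; ring)
    push_cast at this
    exact this
  · have := key (w ^ 2 - m * (z ^ 2 - 1)) (by convert hF using 1; ring)
    push_cast at this
    exact this
  · have := key ((u + w) ^ 2 - 1 - m * ((v + z) ^ 2 - 1)) (by convert hS using 1; ring)
    push_cast at this
    exact this

lemma of_one_of_mod_four_eq_one (h : IsIntFrame 1 m u v w z) (hm : m % 4 = 1) :
    2 ∣ u - 1 ∧ 2 ∣ v ∧ 2 ∣ w ∧ 2 ∣ z - 1 := by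
  have hm4 : (m : ZMod 4) = 1 := by rw [← ZMod.natCast_mod, hm]; rfl
  obtain ⟨hE, hF, -⟩ := h.intCast_zmod_four
  simp only [two_dvd_iff_two_mul_intCast_eq_zero, Int.cast_sub, Int.cast_one]
  rw [hm4] at hE hF
  revert hE hF
  generalize (u : ZMod 4) = U; generalize (v : ZMod 4) = V
  generalize (w : ZMod 4) = W; generalize (z : ZMod 4) = Z
  revert U V W Z
  decide

lemma of_one_of_mod_four_eq_three (h : IsIntFrame 1 m u v w z) (hm : m % 4 = 3) :
    (2 ∣ u - 1 ∧ 2 ∣ v ∧ 2 ∣ w ∧ 2 ∣ z - 1) ∨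
      (2 ∣ u ∧ 2 ∣ v - 1 ∧ 2 ∣ w - 1 ∧ 2 ∣ z) := by
  have hm4 : (m : ZMod 4) = 3 := by rw [← ZMod.natCast_mod, hm]; rfl
  obtain ⟨hE, hF, hS⟩ := h.intCast_zmod_four
  simp only [two_dvd_iff_two_mul_intCast_eq_zero, Int.cast_sub, Int.cast_one]
  rw [hm4] at hE hF hS
  revert hE hF hS
  generalize (u : ZMod 4) = U; generalize (v : ZMod 4) = V
  generalize (w : ZMod 4) = W; generalize (z : ZMod 4) = Z
  revert U V W Z
  decide

end IsIntFrame

lemma isIntFrame_of_isTwistRoot {j m : ℕ} {z : ℤ} (hm : Odd m) (hz : IsTwistRoot j m z) :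
    IsIntFrame (j + 2) m 1 (2 ^ (j + 1)) 1 z := by
  obtain ⟨i, rfl⟩ : ∃ i, j = i + 2 := ⟨j - 2, by have := hz.two_le hm; omega⟩
  obtain ⟨e, he⟩ : Odd ((m : ℤ) * z) := (Int.odd_coe_nat m |>.mpr hm).mul (hz.odd hm)
  obtain ⟨d, hd⟩ := hz
  refine ⟨⟨1, by ring⟩, ⟨-m * 2 ^ (i + 1), by ring⟩,
    ⟨-d, by linear_combination -2 * hd⟩, ⟨-e - d - m * 2 ^ (i + 1), ?_⟩⟩
  linear_combination -2 * hd - 2 ^ (i + 5) * he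

namespace TwoOplusNeg

/-- A model of the `2`-primary part of `ℤ/2 × ℤ/n` for `n = 2^k m`, `m` odd. -/
abbrev V (k : ℕ) : Type := ZMod 2 × ZMod (2 ^ k)

variable {n : ℤ} {j k m N : ℕ}

def mkV (k : ℕ) (a s : ℤ) : V k := ((a : ZMod 2), (s : ZMod (2 ^ k)))

lemma mkV_surjective (x : V k) : ∃ a s, mkV k a s = x := by
  obtain ⟨a, ha⟩ := ZMod.intCast_surjective x.1
  obtain ⟨s, hs⟩ := ZMod.intCast_surjective x.2
  exact ⟨a, s, Prod.ext ha hs⟩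

lemma mkV_eq_mkV_iff {a s a' s' : ℤ} :
    mkV k a s = mkV k a' s' ↔ 2 ∣ a' - a ∧ 2 ^ k ∣ s' - s := by
  simp [mkV, Prod.ext_iff, ZMod.intCast_eq_intCast_iff_dvd_sub]

lemma mkV_zero_zero : mkV k 0 0 = 0 := by simp [mkV]

lemma mkV_add (a s a' s' : ℤ) : mkV k a s + mkV k a' s' = mkV k (a + a') (s + s') := by
  simp [mkV]

lemma zsmul_mkV (c a s : ℤ) : c • mkV k a s = mkV k (c * a) (c * s) := by
  simp [mkV]

lemma mkV_eq_zsmul_add_zsmul (a s : ℤ) : mkV k a s = a • mkV k 1 0 + s • mkV k 0 1 := by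
  rw [zsmul_mkV, zsmul_mkV, mkV_add]
  simp

lemma map_mkV (h : V k →+ V k) (a s : ℤ) :
    h (mkV k a s) = a • h (mkV k 1 0) + s • h (mkV k 0 1) := by
  rw [mkV_eq_zsmul_add_zsmul, map_add, map_zsmul, map_zsmul]

lemma two_pow_nsmul_eq_zero (hk : k ≠ 0) (x : V k) : 2 ^ k • x = 0 := by
  obtain ⟨a, s, rfl⟩ := mkV_surjective x
  rw [← natCast_zsmul, zsmul_mkV, ← mkV_zero_zero, mkV_eq_mkV_iff]
  push_cast
  simp only [zero_sub, dvd_neg]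
  exact ⟨(dvd_pow_self 2 hk).mul_right a, dvd_mul_right _ _⟩

/-- `2^(k+2) q(x)` for the form `q(a, s) = a²/2 - m s²/2^k ∈ ℚ/2ℤ`. -/
def discQ (k m : ℕ) (x : V k) : ZMod (2 ^ (k + 2)) :=
  ((2 ^ k * (x.1.val : ℤ) ^ 2 - 2 * m * (x.2.val : ℤ) ^ 2 : ℤ) : ZMod (2 ^ (k + 2)))

lemma discQ_mkV (hk : k ≠ 0) (a s : ℤ) :
    discQ k m (mkV k a s) = ((2 ^ k * a ^ 2 - 2 * m * s ^ 2 : ℤ) : ZMod (2 ^ (k + 2))) := by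
  rw [discQ, ZMod.intCast_eq_intCast_iff_dvd_sub]
  simp only [mkV, ZMod.val_intCast]
  push_cast
  have ha : 2 * 2 ∣ a ^ 2 - (a % 2) ^ 2 :=
    two_mul_dvd_sq_sub_sq dvd_rfl ⟨a / 2, by rw [Int.emod_def]; ring⟩
  have hs : 2 * 2 ^ k ∣ s ^ 2 - (s % 2 ^ k) ^ 2 :=
    two_mul_dvd_sq_sub_sq (dvd_pow_self 2 hk) ⟨s / 2 ^ k, by rw [Int.emod_def]; ring⟩
  have h1 : (2 : ℤ) ^ (k + 2) ∣ 2 ^ k * (a ^ 2 - (a % 2) ^ 2) := by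
    rw [pow_add]
    exact mul_dvd_mul_left _ ha
  have h2 : (2 : ℤ) ^ (k + 2) ∣ 2 * m * (s ^ 2 - (s % 2 ^ k) ^ 2) := by
    rw [show (2 : ℤ) ^ (k + 2) = 2 * (2 * 2 ^ k) by ring, mul_comm 2 (m : ℤ), mul_assoc]
    exact (mul_dvd_mul_left 2 hs).mul_left _
  exact (dvd_sub h1 h2).trans (dvd_of_eq (by ring))

def IsFrame (k m : ℕ) (x y : V k) : Prop :=
  2 • x = 0 ∧ discQ k m x = discQ k m (mkV k 1 0) ∧ discQ k m y = discQ k m (mkV k 0 1) ∧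
    discQ k m (x + y) = discQ k m (mkV k 1 1)

lemma isFrame_mkV_iff (hk : k ≠ 0) {u v w z : ℤ} :
    IsFrame k m (mkV k u v) (mkV k w z) ↔ IsIntFrame k m u v w z := by
  have hsmul : 2 • mkV k u v = 0 ↔ 2 ^ k ∣ 2 * v := by
    rw [← natCast_zsmul, zsmul_mkV, ← mkV_zero_zero, mkV_eq_mkV_iff]
    simp
  simp only [IsFrame, IsIntFrame, hsmul, mkV_add, discQ_mkV hk, ZMod.intCast_eq_intCast_iff_dvd_sub]
  push_cast
  refine and_congr Iff.rfl (and_congr ?_ (and_congr ?_ ?_)) <;> rw [← dvd_neg]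
  all_goals exact iff_of_eq (congrArg _ (by ring))

lemma discQ_zsmul_add_zsmul (hk : k ≠ 0) (a s : ℤ) (x y : V k) :
    discQ k m (a • x + s • y) = a ^ 2 * discQ k m x + s ^ 2 * discQ k m y +
      a * s * (discQ k m (x + y) - discQ k m x - discQ k m y) := by
  obtain ⟨u, v, rfl⟩ := mkV_surjective x
  obtain ⟨w, z, rfl⟩ := mkV_surjective y
  simp only [zsmul_mkV, mkV_add, discQ_mkV hk]
  push_cast
  ring

def frameHom (hk : k ≠ 0) (x y : V k) (hx : 2 • x = 0) : V k →+ V k :=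
  (ZMod.lift 2 ⟨zmultiplesHom (V k) x, by simpa using hx⟩).coprod
    (ZMod.lift (2 ^ k) ⟨zmultiplesHom (V k) y, by simpa using two_pow_nsmul_eq_zero hk y⟩)

lemma frameHom_mkV (hk : k ≠ 0) (x y : V k) (hx : 2 • x = 0) (a s : ℤ) :
    frameHom hk x y hx (mkV k a s) = a • x + s • y := by
  simp [frameHom, mkV, ZMod.lift_coe]

lemma IsFrame.discQ_frameHom (hk : k ≠ 0) {x y : V k} (h : IsFrame k m x y) (p : V k) :
    discQ k m (frameHom hk x y h.1 p) = discQ k m p := by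
  obtain ⟨a, s, rfl⟩ := mkV_surjective p
  obtain ⟨-, hx, hy, hxy⟩ := h
  rw [frameHom_mkV, discQ_zsmul_add_zsmul hk, hx, hy, hxy, mkV_eq_zsmul_add_zsmul a s,
    discQ_zsmul_add_zsmul hk, mkV_add]
  norm_num

/-- `discQ` is nondegenerate, so its isometries are injective. -/
lemma injective_of_discQ_map (hk : k ≠ 0) (hm : Odd m) (h : V k →+ V k)
    (hh : ∀ x, discQ k m (h x) = discQ k m x) : Function.Injective h := by
  refine (injective_iff_map_eq_zero h).mpr fun p hp => ?_
  obtain ⟨a, s, rfl⟩ := mkV_surjective p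
  have h0 := hh (mkV k a s)
  have he := hh (mkV k a s + mkV k 1 0)
  have hf := hh (mkV k a s + mkV k 0 1)
  rw [map_add, hp, zero_add, hh] at he hf
  rw [hp, ← mkV_zero_zero] at h0
  simp only [mkV_add, discQ_mkV hk] at h0 he hf
  push_cast at h0 he hf
  have ha : (((2 ^ (k + 1) * a : ℤ)) : ZMod (2 ^ (k + 2))) = 0 := by
    push_cast; linear_combination h0 - he
  have hs : (((2 ^ 2 * (m * s) : ℤ)) : ZMod (2 ^ (k + 2))) = 0 := by
    push_cast; linear_combination hf - h0
  rw [ZMod.intCast_zmod_eq_zero_iff_dvd, Nat.cast_pow, Nat.cast_ofNat] at ha hs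
  rw [pow_succ (2 : ℤ) (k + 1), mul_dvd_mul_iff_left (by positivity)] at ha
  rw [show (2 : ℤ) ^ (k + 2) = 2 ^ 2 * 2 ^ k by ring, mul_dvd_mul_iff_left (by positivity)] at hs
  rw [← mkV_zero_zero, mkV_eq_mkV_iff, zero_sub, zero_sub, dvd_neg, dvd_neg]
  exact ⟨ha, (isCoprime_two_pow_of_odd hm k).dvd_of_dvd_mul_left hs⟩

lemma isFrame_map (h : V k ≃+ V k) (hh : ∀ x, discQ k m (h x) = discQ k m x) :
    IsFrame k m (h (mkV k 1 0)) (h (mkV k 0 1)) := by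
  have h2 : 2 • mkV k 1 0 = 0 := by
    rw [← natCast_zsmul, zsmul_mkV, ← mkV_zero_zero, mkV_eq_mkV_iff]
    norm_num
  refine ⟨by rw [← map_nsmul, h2, map_zero], hh _, hh _, ?_⟩
  rw [← map_add, hh, mkV_add]
  norm_num

noncomputable def isometryEquivFrame (hk : k ≠ 0) (hm : Odd m) :
    {h : V k ≃+ V k // ∀ x, discQ k m (h x) = discQ k m x} ≃
      {p : V k × V k // IsFrame k m p.1 p.2} where
  toFun h := ⟨(h.1 (mkV k 1 0), h.1 (mkV k 0 1)), isFrame_map h.1 h.2⟩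
  invFun p := ⟨AddEquiv.ofBijective (frameHom hk p.1.1 p.1.2 p.2.1)
      (Finite.injective_iff_bijective.mp (injective_of_discQ_map hk hm _ (p.2.discQ_frameHom hk))),
    p.2.discQ_frameHom hk⟩
  left_inv h := by
    refine Subtype.ext (AddEquiv.ext fun x => ?_)
    obtain ⟨a, s, rfl⟩ := mkV_surjective x
    show frameHom hk _ _ (isFrame_map h.1 h.2).1 (mkV k a s) = h.1 (mkV k a s)
    rw [frameHom_mkV]
    exact (map_mkV h.1.toAddMonoidHom a s).symm
  right_inv p := by
    ext <;> simp [frameHom_mkV]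

lemma mkV_ne_mkV_neg {t : ℤ} (ht : Odd t) (a : ℤ) : mkV (j + 2) a t ≠ mkV (j + 2) a (-t) := by
  rw [Ne, mkV_eq_mkV_iff]
  rintro ⟨-, h⟩
  rw [show -t - t = 2 * -t by ring, show (2 : ℤ) ^ (j + 2) = 2 * (2 * 2 ^ j) by ring,
    mul_dvd_mul_iff_left two_ne_zero] at h
  exact Int.not_even_iff_odd.mpr ht.neg (even_iff_two_dvd.mpr (dvd_trans (dvd_mul_right 2 _) h))

lemma mkV_ne_mkV_two_pow : mkV (j + 2) 1 0 ≠ mkV (j + 2) 1 (2 ^ (j + 1)) := by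
  rw [Ne, mkV_eq_mkV_iff]
  rintro ⟨-, h⟩
  rw [sub_zero] at h
  have := (pow_dvd_pow_iff (two_ne_zero : (2 : ℤ) ≠ 0) (by norm_num [Int.isUnit_iff])).mp h
  omega

lemma isFrame_iff (hm : Odd m) {x y : V (j + 2)} :
    IsFrame (j + 2) m x y ↔
      (x = mkV _ 1 0 ∧ (y = mkV _ 0 1 ∨ y = mkV _ 0 (-1))) ∨
        (x = mkV _ 1 (2 ^ (j + 1)) ∧ ∃ z, IsTwistRoot j m z ∧ y = mkV _ 1 z) := by
  obtain ⟨u, v, rfl⟩ := mkV_surjective x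
  obtain ⟨w, z, rfl⟩ := mkV_surjective y
  constructor
  · intro h
    rw [isFrame_mkV_iff (by omega)] at h
    obtain ⟨hu, hz, ⟨hw, hv, hz1⟩ | ⟨hw, hv, hzt⟩⟩ := h.classify hm
    · have hu' := (odd_one.sub_odd hu).two_dvd
      refine Or.inl ⟨mkV_eq_mkV_iff.mpr ⟨hu', by simpa using hv⟩, ?_⟩
      rcases pow_dvd_sub_or_pow_dvd_add_of_dvd_sq_sub_sq odd_one (by simpa using hz1) with h1 | h1
      · exact Or.inl (mkV_eq_mkV_iff.mpr ⟨by simpa using hw.two_dvd, by rwa [dvd_sub_comm]⟩)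
      · refine Or.inr (mkV_eq_mkV_iff.mpr ⟨by simpa using hw.two_dvd, ?_⟩)
        rwa [show -1 - z = -(z + 1) by ring, dvd_neg]
    · exact Or.inr ⟨mkV_eq_mkV_iff.mpr ⟨(odd_one.sub_odd hu).two_dvd, by rwa [dvd_sub_comm]⟩,
        z, hzt, mkV_eq_mkV_iff.mpr ⟨(odd_one.sub_odd hw).two_dvd, by simp⟩⟩
  · rintro (⟨hx, hy | hy⟩ | ⟨hx, z', hz', hy⟩) <;> rw [hx, hy, isFrame_mkV_iff (by omega)]
    · simp [IsIntFrame]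
    · simp [IsIntFrame]
    · exact isIntFrame_of_isTwistRoot hm hz'

lemma isFrame_one_iff_of_mod_four_eq_one (hm : m % 4 = 1) {x y : V 1} :
    IsFrame 1 m x y ↔ x = mkV 1 1 0 ∧ y = mkV 1 0 1 := by
  constructor
  · obtain ⟨u, v, rfl⟩ := mkV_surjective x
    obtain ⟨w, z, rfl⟩ := mkV_surjective y
    rw [isFrame_mkV_iff one_ne_zero, mkV_eq_mkV_iff, mkV_eq_mkV_iff]
    intro h
    obtain ⟨hu, hv, hw, hz⟩ := h.of_one_of_mod_four_eq_one hm
    simp only [pow_one, zero_sub, dvd_neg]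
    exact ⟨⟨dvd_sub_comm.mp hu, hv⟩, hw, dvd_sub_comm.mp hz⟩
  · rintro ⟨rfl, rfl⟩
    rw [isFrame_mkV_iff one_ne_zero]
    norm_num [IsIntFrame]

lemma isFrame_one_iff_of_mod_four_eq_three (hm : m % 4 = 3) {x y : V 1} :
    IsFrame 1 m x y ↔
      (x = mkV 1 1 0 ∧ y = mkV 1 0 1) ∨ (x = mkV 1 0 1 ∧ y = mkV 1 1 0) := by
  constructor
  · obtain ⟨u, v, rfl⟩ := mkV_surjective x
    obtain ⟨w, z, rfl⟩ := mkV_surjective y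
    rw [isFrame_mkV_iff one_ne_zero]
    intro h
    simp only [mkV_eq_mkV_iff, pow_one, zero_sub, dvd_neg]
    rcases h.of_one_of_mod_four_eq_three hm with ⟨hu, hv, hw, hz⟩ | ⟨hu, hv, hw, hz⟩
    · exact Or.inl ⟨⟨dvd_sub_comm.mp hu, hv⟩, hw, dvd_sub_comm.mp hz⟩
    · exact Or.inr ⟨⟨hu, dvd_sub_comm.mp hv⟩, dvd_sub_comm.mp hw, hz⟩
  · rintro (⟨rfl, rfl⟩ | ⟨rfl, rfl⟩) <;> rw [isFrame_mkV_iff one_ne_zero]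
    · norm_num [IsIntFrame]
    · obtain ⟨c, hc⟩ : ∃ c, (m : ℤ) = 4 * c + 3 := ⟨m / 4, by omega⟩
      exact ⟨⟨1, by ring⟩, ⟨-(c + 1), by linear_combination -2 * hc⟩,
        ⟨c + 1, by linear_combination 2 * hc⟩, ⟨0, by ring⟩⟩

theorem card_frames_one_of_mod_four_eq_one (hm : m % 4 = 1) :
    Nat.card {p : V 1 × V 1 // IsFrame 1 m p.1 p.2} = 1 := by
  rw [Nat.card_subtype_eq_finset_card {(mkV 1 1 0, mkV 1 0 1)}
    (fun p => by simp [isFrame_one_iff_of_mod_four_eq_one hm, Prod.ext_iff])]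
  rfl

theorem card_frames_one_of_mod_four_eq_three (hm : m % 4 = 3) :
    Nat.card {p : V 1 × V 1 // IsFrame 1 m p.1 p.2} = 2 := by
  rw [Nat.card_subtype_eq_finset_card {(mkV 1 1 0, mkV 1 0 1), (mkV 1 0 1, mkV 1 1 0)}
    (fun p => by simp [isFrame_one_iff_of_mod_four_eq_three hm, Prod.ext_iff])]
  refine Finset.card_pair fun h => ?_
  have := (mkV_eq_mkV_iff.mp (Prod.ext_iff.mp h).1).1
  norm_num at this

lemma exists_isTwistRoot_and_eq_iff (hm : Odd m) {t : ℤ} (ht : IsTwistRoot j m t)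
    {y : V (j + 2)} :
    (∃ z, IsTwistRoot j m z ∧ y = mkV _ 1 z) ↔ y = mkV _ 1 t ∨ y = mkV _ 1 (-t) := by
  constructor
  · rintro ⟨z, hz, rfl⟩
    rcases hz.dvd_sub_or_dvd_add hm ht with h | h
    · exact Or.inl (mkV_eq_mkV_iff.mpr ⟨by simp, by rwa [dvd_sub_comm]⟩)
    · refine Or.inr (mkV_eq_mkV_iff.mpr ⟨by simp, ?_⟩)
      rwa [show -t - z = -(z + t) by ring, dvd_neg]
  · rintro (rfl | rfl)
    exacts [⟨t, ht, rfl⟩, ⟨-t, ht.neg, rfl⟩]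

theorem card_frames_of_lt_two (hm : Odd m) (hj : j < 2) :
    Nat.card {p : V (j + 2) × V (j + 2) // IsFrame (j + 2) m p.1 p.2} = 2 := by
  have hroot : ∀ z, ¬ IsTwistRoot j m z := fun z hz => by have := hz.two_le hm; omega
  rw [Nat.card_subtype_eq_finset_card {(mkV _ 1 0, mkV _ 0 1), (mkV _ 1 0, mkV _ 0 (-1))}
    (fun p => by simp [isFrame_iff hm, hroot, Prod.ext_iff, and_or_left])]
  exact Finset.card_pair fun h => mkV_ne_mkV_neg odd_one 0 (Prod.ext_iff.mp h).2

theorem card_frames_of_two_le (hm : Odd m) (hj : 2 ≤ j) :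
    Nat.card {p : V (j + 2) × V (j + 2) // IsFrame (j + 2) m p.1 p.2} = 4 := by
  obtain ⟨t, ht⟩ := exists_isTwistRoot hj hm
  have hne := mkV_ne_mkV_two_pow (j := j)
  rw [Nat.card_subtype_eq_finset_card {(mkV _ 1 0, mkV _ 0 1), (mkV _ 1 0, mkV _ 0 (-1)),
      (mkV _ 1 (2 ^ (j + 1)), mkV _ 1 t), (mkV _ 1 (2 ^ (j + 1)), mkV _ 1 (-t))}
    (fun ⟨x, y⟩ => by
      simp only [isFrame_iff hm, exists_isTwistRoot_and_eq_iff hm ht, Finset.mem_insert,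
        Finset.mem_singleton, Prod.mk.injEq]
      tauto)]
  have h1 := mkV_ne_mkV_neg (j := j) odd_one 0
  have ht' := mkV_ne_mkV_neg (j := j) (ht.odd hm) 1
  simp [Prod.ext_iff, h1, ht', hne]

theorem isometry_involutive (hm : Odd m) (h : V (j + 2) ≃+ V (j + 2))
    (hh : ∀ x, discQ (j + 2) m (h x) = discQ (j + 2) m x) (x : V (j + 2)) : h (h x) = x := by
  have hmap : ∀ a s, h (mkV _ a s) = a • h (mkV _ 1 0) + s • h (mkV _ 0 1) :=
    map_mkV h.toAddMonoidHom
  suffices h (h (mkV _ 1 0)) = mkV _ 1 0 ∧ h (h (mkV _ 0 1)) = mkV _ 0 1 by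
    obtain ⟨a, s, rfl⟩ := mkV_surjective x
    rw [hmap, map_add, map_zsmul, map_zsmul, this.1, this.2, mkV_eq_zsmul_add_zsmul a s]
  rcases (isFrame_iff hm).mp (isFrame_map h hh) with ⟨he, hf | hf⟩ | ⟨he, z, hz, hf⟩
  · rw [he, he, hf, hf]
    exact ⟨rfl, rfl⟩
  · refine ⟨by rw [he, he], ?_⟩
    rw [hf, hmap, he, hf, zsmul_mkV, zsmul_mkV, mkV_add]
    norm_num
  · obtain ⟨c, hc⟩ := hz.odd hm
    constructor
    · rw [he, hmap, he, hf, zsmul_mkV, zsmul_mkV, mkV_add, mkV_eq_mkV_iff]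
      exact ⟨⟨-2 ^ j, by ring⟩, ⟨-(c + 1), by rw [hc]; ring⟩⟩
    · rw [hf, hmap, he, hf, zsmul_mkV, zsmul_mkV, mkV_add, mkV_eq_mkV_iff]
      exact ⟨⟨-(c + 1), by rw [hc]; ring⟩,
        (dvd_neg.mpr (hz.dvd_sq_sub_one_add hm)).trans (dvd_of_eq (by ring))⟩

def toAmbient (hN : N = 2 ^ k * m) : V k →+ ZMod 2 × ZMod N :=
  (AddMonoidHom.id (ZMod 2)).prodMap
    (ZMod.lift (2 ^ k) ⟨m • Int.castAddHom (ZMod N), by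
      simpa [mul_comm] using congrArg ((↑) : ℕ → ZMod N) hN.symm⟩)

lemma toAmbient_mkV (hN : N = 2 ^ k * m) (a s : ℤ) :
    toAmbient hN (mkV k a s) = ((a : ZMod 2), ((m * s : ℤ) : ZMod N)) := by
  simp [toAmbient, mkV, ZMod.lift_coe]

lemma toAmbient_injective (hN : N = 2 ^ k * m) (hm : m ≠ 0) :
    Function.Injective (toAmbient hN) := by
  refine (injective_iff_map_eq_zero _).mpr fun p hp => ?_
  obtain ⟨a, s, rfl⟩ := mkV_surjective p
  rw [toAmbient_mkV, Prod.mk_eq_zero, ZMod.intCast_zmod_eq_zero_iff_dvd,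
    ZMod.intCast_zmod_eq_zero_iff_dvd, hN, Nat.cast_mul, mul_comm, Nat.cast_pow,
    mul_dvd_mul_iff_left (by exact_mod_cast hm)] at hp
  rw [← mkV_zero_zero, mkV_eq_mkV_iff, zero_sub, zero_sub, dvd_neg, dvd_neg]
  exact_mod_cast hp

lemma range_toAmbient (hN : N = 2 ^ k * m) (hk : k ≠ 0) (hm : Odd m) :
    (toAmbient hN).range = primaryPart 2 (ZMod 2 × ZMod N) := by
  have : NeZero N := ⟨by rw [hN]; exact mul_ne_zero (by positivity) hm.pos.ne'⟩
  ext x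
  constructor
  · rintro ⟨p, rfl⟩
    exact ⟨k, by rw [← map_nsmul, two_pow_nsmul_eq_zero hk, map_zero]⟩
  · rintro ⟨j, hj⟩
    -- `2^j x.2 = 0` forces `m ∣ x.2` since `m` is odd
    have hval : N ∣ 2 ^ j * x.2.val := by
      rw [← ZMod.natCast_eq_zero_iff, Nat.cast_mul, ZMod.natCast_val, ZMod.cast_id', id]
      simpa [nsmul_eq_mul] using congrArg Prod.snd hj
    obtain ⟨c, hc⟩ :=
      (Nat.Coprime.pow_right j (Nat.coprime_two_right.mpr hm)).dvd_of_dvd_mul_left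
      ((Dvd.intro_left _ hN.symm).trans hval)
    refine ⟨mkV k x.1.val c, ?_⟩
    rw [toAmbient_mkV]
    push_cast
    rw [← Nat.cast_mul, ← hc]
    simp

noncomputable def primaryEquiv (hN : N = 2 ^ k * m) (hk : k ≠ 0) (hm : Odd m) :
    V k ≃+ primaryPart 2 (ZMod 2 × ZMod N) :=
  (AddMonoidHom.ofInjective (toAmbient_injective hN hm.pos.ne')).trans
    (AddEquiv.addSubgroupCongr (range_toAmbient hN hk hm))

@[simp]
lemma coe_primaryEquiv (hN : N = 2 ^ k * m) (hk : k ≠ 0) (hm : Odd m) (p : V k) :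
    (primaryEquiv hN hk hm p : ZMod 2 × ZMod N) = toAmbient hN p := rfl

lemma toNat_eq_of_eq (hn : n = 2 ^ k * m) : n.toNat = 2 ^ k * m := by
  rw [hn, show (2 : ℤ) ^ k * m = ((2 ^ k * m : ℕ) : ℤ) by push_cast; rfl, Int.toNat_natCast]

theorem qPres2_iff (hk : k ≠ 0) (hm : Odd m) (hn : n = 2 ^ k * m)
    (g : primaryPart 2 (ZMod 2 × ZMod n.toNat) ≃+ primaryPart 2 (ZMod 2 × ZMod n.toNat)) :
    QPres2 n g ↔ ∀ p, discQ k m ((primaryEquiv (toNat_eq_of_eq hn) hk hm).symm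
      (g (primaryEquiv (toNat_eq_of_eq hn) hk hm p))) = discQ k m p := by
  set Φ := primaryEquiv (toNat_eq_of_eq hn) hk hm
  have hm0 : (m : ℤ) ≠ 0 := by exact_mod_cast hm.pos.ne'
  have hcast2 (b c : ℤ) : (b : ZMod 2) = c ↔ 2 ∣ b - c := by
    rw [ZMod.intCast_eq_intCast_iff_dvd_sub, dvd_sub_comm, Nat.cast_ofNat]
  have hcast (b c : ℤ) : (b : ZMod n.toNat) = c ↔ n ∣ b - c := by
    rw [ZMod.intCast_eq_intCast_iff_dvd_sub, dvd_sub_comm,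
      Int.toNat_of_nonneg (hn ▸ by positivity)]
  have hdiscQ (a s a' s' : ℤ) : discQ k m (mkV k a' s') = discQ k m (mkV k a s) ↔
      2 ^ (k + 2) ∣ (2 ^ k * a' ^ 2 - 2 * m * s' ^ 2) - (2 ^ k * a ^ 2 - 2 * m * s ^ 2) := by
    rw [discQ_mkV hk, discQ_mkV hk, ZMod.intCast_eq_intCast_iff_dvd_sub, dvd_sub_comm]
    push_cast
    rfl
  constructor
  · intro hQ p
    obtain ⟨a, s, rfl⟩ := mkV_surjective p
    obtain ⟨a', s', hp'⟩ := mkV_surjective (Φ.symm (g (Φ (mkV k a s))))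
    have hg : g (Φ (mkV k a s)) = Φ (mkV k a' s') := by rw [hp', AddEquiv.apply_symm_apply]
    have key := hQ (Φ (mkV k a s)) a (m * s) a' (m * s')
    simp only [hg, Φ, coe_primaryEquiv, toAmbient_mkV, forall_const] at key
    rw [← hp', hdiscQ]
    exact (four_mul_dvd_iff hk hm0 hn (by simp) (by simp) (by simp) (by simp)).mp key
  · intro hI x α β α' β' h1 h2 h3 h4
    obtain ⟨p, rfl⟩ := Φ.surjective x
    obtain ⟨a, s, rfl⟩ := mkV_surjective p
    obtain ⟨a', s', hp'⟩ := mkV_surjective (Φ.symm (g (Φ (mkV k a s))))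
    have hg : g (Φ (mkV k a s)) = Φ (mkV k a' s') := by rw [hp', AddEquiv.apply_symm_apply]
    simp only [hg, Φ, coe_primaryEquiv, toAmbient_mkV, hcast, hcast2] at h1 h2 h3 h4
    refine (four_mul_dvd_iff hk hm0 hn h1 h3 h2 h4).mpr ?_
    rw [← hdiscQ, hp']
    exact hI _

theorem card_qPres2_eq_card_frames (hk : k ≠ 0) (hm : Odd m) (hn : n = 2 ^ k * m) :
    Nat.card {g : primaryPart 2 (ZMod 2 × ZMod n.toNat) ≃+
      primaryPart 2 (ZMod 2 × ZMod n.toNat) // QPres2 n g} =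
      Nat.card {p : V k × V k // IsFrame k m p.1 p.2} :=
  Nat.card_congr <| (Equiv.subtypeEquiv (AddAut.congr (primaryEquiv _ hk hm).symm).toEquiv
    fun g => qPres2_iff hk hm hn g).trans (isometryEquivFrame hk hm)

theorem qPres2_involutive (hm : Odd m) (hn : n = 2 ^ (j + 2) * m)
    {g : primaryPart 2 (ZMod 2 × ZMod n.toNat) ≃+ primaryPart 2 (ZMod 2 × ZMod n.toNat)}
    (hg : QPres2 n g) (x : primaryPart 2 (ZMod 2 × ZMod n.toNat)) : g (g x) = x := by
  set Φ := primaryEquiv (toNat_eq_of_eq hn) (by omega) hm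
  have h := isometry_involutive hm (Φ.trans (g.trans Φ.symm)) ((qPres2_iff _ hm hn g).mp hg)
    (Φ.symm x)
  simpa using h

end TwoOplusNeg

theorem order_Oq2_of_two_oplus_neg_n_general (n : ℤ) (hn : 0 < n) :
    (n % 8 = 2 →
      Nat.card {g : primaryPart 2 (ZMod 2 × ZMod n.toNat) ≃+
          primaryPart 2 (ZMod 2 × ZMod n.toNat) // QPres2 n g} = 1) ∧
    (n % 16 = 0 →
      Nat.card {g : primaryPart 2 (ZMod 2 × ZMod n.toNat) ≃+
          primaryPart 2 (ZMod 2 × ZMod n.toNat) // QPres2 n g} = 4 ∧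
      ∀ g : primaryPart 2 (ZMod 2 × ZMod n.toNat) ≃+
          primaryPart 2 (ZMod 2 × ZMod n.toNat),
        QPres2 n g → ∀ x, g (g x) = x) ∧
    ((n % 8 = 4 ∨ n % 8 = 6 ∨ n % 16 = 8) →
      Nat.card {g : primaryPart 2 (ZMod 2 × ZMod n.toNat) ≃+
          primaryPart 2 (ZMod 2 × ZMod n.toNat) // QPres2 n g} = 2) := by
  open TwoOplusNeg in
  obtain ⟨k, _, ⟨m, rfl⟩, hN⟩ := Nat.exists_eq_two_pow_mul_odd (n := n.toNat) (by omega)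
  have hm : Odd (2 * m + 1) := ⟨m, rfl⟩
  have hnkm : n = 2 ^ k * ((2 * m + 1 : ℕ) : ℤ) := by
    rw [← Int.toNat_of_nonneg hn.le, hN]
    push_cast
    rfl
  obtain _ | _ | _ | _ | j := k
  · push_cast at hnkm
    omega
  · rw [card_qPres2_eq_card_frames one_ne_zero hm hnkm]
    push_cast at hnkm
    exact ⟨fun _ => card_frames_one_of_mod_four_eq_one (by omega), by omega,
      fun _ => card_frames_one_of_mod_four_eq_three (by omega)⟩
  · rw [card_qPres2_eq_card_frames two_ne_zero hm hnkm]
    push_cast at hnkm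
    exact ⟨by omega, by omega, fun _ => card_frames_of_lt_two (j := 0) hm (by omega)⟩
  · rw [card_qPres2_eq_card_frames three_ne_zero hm hnkm]
    push_cast at hnkm
    exact ⟨by omega, by omega, fun _ => card_frames_of_lt_two (j := 1) hm (by omega)⟩
  · obtain ⟨X, hX⟩ : (16 : ℤ) ∣ n :=
      ⟨2 ^ j * (2 * m + 1), by rw [hnkm]; push_cast; ring⟩
    rw [card_qPres2_eq_card_frames (by omega) hm hnkm]
    exact ⟨by omega, fun _ => ⟨card_frames_of_two_le hm (by omega),
      fun g hg => qPres2_involutive hm hnkm hg⟩, by omega⟩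

/-- For the discriminant quadratic form `q` of `⟨2⟩⊕⟨-n⟩` on
`ℤ/2 × ℤ/n`, the group `O(q₂)` of automorphisms of the 2-primary component preserving
`q₂` has order `1` if `n ≡ 2 mod 8`, order `4` (with every element an involution,
hence `≅ (ℤ/2)²`) if `n ≡ 0 mod 16`, and order `2` otherwise. -/
theorem order_Oq2_of_two_oplus_neg_n (n : ℤ) (hn : 0 < n) (heven : 2 ∣ n) :
    (n % 8 = 2 →
      Nat.card {g : primaryPart 2 (ZMod 2 × ZMod n.toNat) ≃+
          primaryPart 2 (ZMod 2 × ZMod n.toNat) // QPres2 n g} = 1) ∧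
    (n % 16 = 0 →
      Nat.card {g : primaryPart 2 (ZMod 2 × ZMod n.toNat) ≃+
          primaryPart 2 (ZMod 2 × ZMod n.toNat) // QPres2 n g} = 4 ∧
      ∀ g : primaryPart 2 (ZMod 2 × ZMod n.toNat) ≃+
          primaryPart 2 (ZMod 2 × ZMod n.toNat),
        QPres2 n g → ∀ x, g (g x) = x) ∧
    ((n % 8 = 4 ∨ n % 8 = 6 ∨ n % 16 = 8) →
      Nat.card {g : primaryPart 2 (ZMod 2 × ZMod n.toNat) ≃+
          primaryPart 2 (ZMod 2 × ZMod n.toNat) // QPres2 n g} = 2) :=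
  order_Oq2_of_two_oplus_neg_n_general n hn
end

section
/- Let L be an even unimodular lattice, S ⊆ L a nondegenerate primitive sublattice (i.e. L/S is torsion-free), and T = S^⊥ = {x ∈ L : ⟨x,S⟩ = 0}. Write each x ∈ L as x = x_S + x_T with x_S ∈ S⊗ℚ and x_T ∈ T⊗ℚ; then x_S ∈ S∨ and x_T ∈ T∨, and the image of L under x ↦ (x_S mod S, x_T mod T) in A_S ⊕ A_T is the graph of a group isomorphism γ : A_S → A_T satisfying q_T(γ(ξ)) = −q_S(ξ) for all ξ ∈ A_S. In particular the discriminant quadratic form q_T is isomorphic to −q_S. -/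
open Matrix

/-!
Nondegeneracy of `S` splits `L ⊗ ℚ = S ⊗ ℚ ⊕ T ⊗ ℚ`; the components `x_S, x_T` of `x ∈ L` pair
integrally with `S` and `T`, so they lie in the duals, and `T` is nondegenerate because `L` is.
The pairs `(x_S, x_T)`, `x ∈ L`, form a subgroup `R ⊆ S∨ × T∨` whose two projections are onto:
for `u ∈ S∨` the integral functional `⟨u, ·⟩` on `S` extends to `L` (primitivity makes `S` a
direct summand), and unimodularity writes the extension as `⟨x, ·⟩` with `x ∈ L`, so `x_S = u`.
Primitivity also gives `R ∩ (S∨ × 0) = S × 0` and `R ∩ (0 × T∨) = 0 × T`, so `R` is the graph of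
an isomorphism `A_S ≅ A_T`; finally `x_S² + x_T² = x² ∈ 2ℤ`.
-/

theorem AddSubgroup.exists_addEquiv_quotient_of_graph {A B : Type*} [AddCommGroup A]
    [AddCommGroup B] {A₀ : AddSubgroup A} {B₀ : AddSubgroup B} (R : AddSubgroup (A × B))
    (hA : ∀ a, ∃ b, (a, b) ∈ R) (hB : ∀ b, ∃ a, (a, b) ∈ R)
    (hA₀ : ∀ a, (a, 0) ∈ R ↔ a ∈ A₀) (hB₀ : ∀ b, (0, b) ∈ R ↔ b ∈ B₀) :
    ∃ γ : A ⧸ A₀ ≃+ B ⧸ B₀, ∀ (a : A) (b : B), γ a = b ↔ (a, b) ∈ R := by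
  let f : R →+ A ⧸ A₀ := (QuotientAddGroup.mk' A₀).comp ((AddMonoidHom.fst A B).comp R.subtype)
  let g : R →+ B ⧸ B₀ := (QuotientAddGroup.mk' B₀).comp ((AddMonoidHom.snd A B).comp R.subtype)
  have hf : Function.Surjective f := by
    rintro ⟨a⟩
    obtain ⟨b, hb⟩ := hA a
    exact ⟨⟨(a, b), hb⟩, rfl⟩
  have hg : Function.Surjective g := by
    rintro ⟨b⟩
    obtain ⟨a, ha⟩ := hB b
    exact ⟨⟨(a, b), ha⟩, rfl⟩
  have hker : f.ker = g.ker := by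
    ext ⟨⟨a, b⟩, hab⟩
    simp only [AddMonoidHom.mem_ker, f, g, AddMonoidHom.comp_apply, QuotientAddGroup.mk'_apply,
      QuotientAddGroup.eq_zero_iff, AddSubgroup.coe_subtype, AddMonoidHom.coe_fst,
      AddMonoidHom.coe_snd, ← hA₀, ← hB₀]
    constructor <;> intro h <;> simpa using R.sub_mem hab h
  let γ := (QuotientAddGroup.quotientKerEquivOfSurjective f hf).symm.trans
    ((QuotientAddGroup.quotientAddEquivOfEq hker).trans
      (QuotientAddGroup.quotientKerEquivOfSurjective g hg))
  have hγ : ∀ p : R, γ (f p) = g p := fun p => by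
    have h : (QuotientAddGroup.quotientKerEquivOfSurjective f hf).symm (f p) = (p : R ⧸ f.ker) :=
      (AddEquiv.symm_apply_eq _).2 rfl
    simp only [γ, AddEquiv.trans_apply, h]
    rfl
  refine ⟨γ, fun a b => ⟨fun h => ?_, fun h => hγ ⟨(a, b), h⟩⟩⟩
  obtain ⟨b₀, hb₀⟩ := hA a
  have hbb₀ : ((b₀ : B) : B ⧸ B₀) = b := (hγ ⟨(a, b₀), hb₀⟩).symm.trans h
  simpa using R.add_mem hb₀ ((hB₀ _).2 (QuotientAddGroup.eq.1 hbb₀))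

section CastVec

variable {N r : ℕ}

lemma castVec_injective : Function.Injective (castVec (N := N)) :=
  fun _ _ h => funext fun i => Int.cast_injective (congrFun h i)

lemma castVec_zero : castVec (0 : Fin N → ℤ) = 0 := (castHom N).map_zero

lemma castVec_add (x y : Fin N → ℤ) : castVec (x + y) = castVec x + castVec y :=
  (castHom N).map_add x y

lemma castVec_smul (m : ℤ) (x : Fin N → ℤ) : castVec (m • x) = (m : ℚ) • castVec x := by
  funext i; simp [castVec]

lemma castVec_vecMul (c : Fin r → ℤ) (B : Matrix (Fin r) (Fin N) ℤ) :
    castVec (c ᵥ* B) = castVec c ᵥ* B.map ((↑) : ℤ → ℚ) := by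
  funext i; simp [castVec, vecMul, dotProduct]

lemma exists_smul_eq_castVec (q : Fin N → ℚ) :
    ∃ m : ℤ, m ≠ 0 ∧ ∃ z : Fin N → ℤ, (m : ℚ) • q = castVec z := by
  obtain ⟨b, hb⟩ := IsLocalization.exist_integer_multiples (nonZeroDivisors ℤ) Finset.univ q
  choose z hz using fun i => hb i (Finset.mem_univ i)
  refine ⟨b, nonZeroDivisors.coe_ne_zero b, z, funext fun i => ?_⟩
  simpa [castVec, Algebra.smul_def] using (hz i).symm

end CastVec

/-- Equivalently, `ℤ^N ⧸ P` is torsion-free. -/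
def IsPrimitiveSubmodule {N : ℕ} (P : Submodule ℤ (Fin N → ℤ)) : Prop :=
  ∀ (m : ℤ) (x : Fin N → ℤ), m ≠ 0 → m • x ∈ P → x ∈ P

section Basis

variable {N r : ℕ} {P : Submodule ℤ (Fin N → ℤ)} {B : Matrix (Fin r) (Fin N) ℤ}

lemma IsPrimitiveSubmodule.exists_projection (hP : IsPrimitiveSubmodule P) :
    ∃ π : (Fin N → ℤ) →ₗ[ℤ] (Fin N → ℤ), (∀ z, π z ∈ P) ∧ ∀ s ∈ P, π s = s := by
  have : Module.IsTorsionFree ℤ ((Fin N → ℤ) ⧸ P) := by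
    refine .of_smul_eq_zero fun m y hy => or_iff_not_imp_left.2 fun hm => ?_
    induction y using Submodule.Quotient.induction_on with
    | H x =>
      rw [← Submodule.Quotient.mk_smul, Submodule.Quotient.mk_eq_zero] at hy
      exact (Submodule.Quotient.mk_eq_zero P).2 (hP m x hm hy)
  have : Module.Free ℤ ((Fin N → ℤ) ⧸ P) := Module.free_of_finite_type_torsion_free'
  obtain ⟨σ, hσ⟩ := P.mkQ.exists_rightInverse_of_surjective P.range_mkQ
  refine ⟨LinearMap.id - σ ∘ₗ P.mkQ, fun z => ?_, fun s hs => ?_⟩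
  · rw [← Submodule.Quotient.mk_eq_zero, ← P.mkQ_apply, LinearMap.sub_apply, map_sub]
    simpa using sub_eq_zero.2 (LinearMap.congr_fun hσ (P.mkQ z)).symm
  · simp [(Submodule.Quotient.mk_eq_zero P).2 hs]

lemma vecMul_mem_of_forall_row_mem (h : ∀ i, B i ∈ P) (c : Fin r → ℤ) : c ᵥ* B ∈ P := by
  rw [vecMul_eq_sum]
  exact P.sum_mem fun i _ => P.smul_mem (c i) (h i)

namespace IsBasisOf

lemma eq_zero_of_vecMul_eq_zero (hB : IsBasisOf P B) {c : Fin r → ℤ} (hc : c ᵥ* B = 0) :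
    c = 0 := by
  obtain ⟨c₀, -, huniq⟩ := hB.2 0 P.zero_mem
  rw [huniq c hc.symm, ← huniq 0 (zero_vecMul B).symm]

lemma eq_zero_of_vecMul_map_eq_zero (hB : IsBasisOf P B) {a : Fin r → ℚ}
    (ha : a ᵥ* B.map ((↑) : ℤ → ℚ) = 0) : a = 0 := by
  obtain ⟨m, hm, d, hd⟩ := exists_smul_eq_castVec a
  have hdB : d ᵥ* B = 0 := castVec_injective <| by
    rw [castVec_vecMul, ← hd, smul_vecMul, ha, smul_zero, castVec_zero]
  have hma : (m : ℚ) • a = 0 := by rw [hd, hB.eq_zero_of_vecMul_eq_zero hdB, castVec_zero]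
  exact (smul_eq_zero.1 hma).resolve_left (Int.cast_ne_zero.2 hm)

lemma exists_castVec_eq (hB : IsBasisOf P B) (hP : IsPrimitiveSubmodule P) {z : Fin N → ℤ}
    {a : Fin r → ℚ} (hz : castVec z = a ᵥ* B.map ((↑) : ℤ → ℚ)) : ∃ c, castVec c = a := by
  obtain ⟨m, hm, d, hd⟩ := exists_smul_eq_castVec a
  have hmz : m • z = d ᵥ* B := castVec_injective <| by
    rw [castVec_smul, castVec_vecMul, hz, ← hd, smul_vecMul]
  obtain ⟨c, hc, -⟩ := hB.2 z (hP m z hm (hmz ▸ vecMul_mem_of_forall_row_mem hB.1 d))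
  refine ⟨c, Eq.symm <| sub_eq_zero.1 <| hB.eq_zero_of_vecMul_map_eq_zero ?_⟩
  rw [sub_vecMul, ← hz, ← castVec_vecMul, ← hc, sub_self]

end IsBasisOf

end Basis

namespace IntLattice

variable (L : IntLattice) {r r' : ℕ}

lemma qbilin_castVec (x y : Fin L.rank → ℤ) :
    L.qbilin (castVec x) (castVec y) = L.bilin x y := by
  simp [qbilin, bilin, castVec, dotProduct, mulVec]

lemma qbilin_comm (x y : Fin L.rank → ℚ) : L.qbilin x y = L.qbilin y x := by
  simp only [qbilin, dotProduct, mulVec, Finset.mul_sum]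
  rw [Finset.sum_comm]
  refine Finset.sum_congr rfl fun j _ => Finset.sum_congr rfl fun i _ => ?_
  rw [map_apply, map_apply, L.gram_symm_apply i j]
  ring

lemma qbilin_add_left (x y z : Fin L.rank → ℚ) :
    L.qbilin (x + y) z = L.qbilin x z + L.qbilin y z :=
  add_dotProduct x y _

lemma qbilin_add_right (x y z : Fin L.rank → ℚ) :
    L.qbilin x (y + z) = L.qbilin x y + L.qbilin x z := by
  rw [qbilin, mulVec_add, dotProduct_add]; rfl

lemma qbilin_smul_left (c : ℚ) (x y : Fin L.rank → ℚ) :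
    L.qbilin (c • x) y = c * L.qbilin x y :=
  smul_dotProduct c x _

lemma qbilin_sub_left (x y z : Fin L.rank → ℚ) :
    L.qbilin (x - y) z = L.qbilin x z - L.qbilin y z :=
  sub_dotProduct x y _

lemma qbilin_vecMul_left (B : Matrix (Fin r) (Fin L.rank) ℤ) (a : Fin r → ℚ)
    (y : Fin L.rank → ℚ) :
    L.qbilin (a ᵥ* B.map ((↑) : ℤ → ℚ)) y = ∑ i, a i * L.qbilin (castVec (B i)) y := by
  simp only [qbilin, vecMul_eq_sum, sum_dotProduct, smul_dotProduct, smul_eq_mul]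
  rfl

lemma qbilin_vecMul_castVec_eq_zero {B : Matrix (Fin r) (Fin L.rank) ℤ} {z : Fin L.rank → ℤ}
    (h : ∀ i, L.bilin (B i) z = 0) (a : Fin r → ℚ) :
    L.qbilin (a ᵥ* B.map ((↑) : ℤ → ℚ)) (castVec z) = 0 := by
  simp [qbilin_vecMul_left, qbilin_castVec, h]

lemma qbilin_vecMul_vecMul_eq_zero {BP : Matrix (Fin r) (Fin L.rank) ℤ}
    {BQ : Matrix (Fin r') (Fin L.rank) ℤ} (h : ∀ i j, L.bilin (BP i) (BQ j) = 0)
    (a : Fin r → ℚ) (b : Fin r' → ℚ) :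
    L.qbilin (a ᵥ* BP.map ((↑) : ℤ → ℚ)) (b ᵥ* BQ.map ((↑) : ℤ → ℚ)) = 0 := by
  rw [qbilin_vecMul_left]
  refine Finset.sum_eq_zero fun i _ => ?_
  rw [qbilin_comm, L.qbilin_vecMul_castVec_eq_zero (fun j => by rw [bilin_comm, h]), mul_zero]

lemma qbilin_vecMul_row (B : Matrix (Fin r) (Fin L.rank) ℤ) (a : Fin r → ℚ) (i : Fin r) :
    L.qbilin (a ᵥ* B.map ((↑) : ℤ → ℚ)) (castVec (B i))
      = ((L.gramOf B).map ((↑) : ℤ → ℚ) *ᵥ a) i := by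
  simp only [qbilin_vecMul_left, qbilin_castVec, mulVec, dotProduct]
  exact Finset.sum_congr rfl fun j _ => by rw [mul_comm, L.bilin_comm]; rfl

lemma sub_qbilin (B : Matrix (Fin r) (Fin L.rank) ℤ) (a c : Fin r → ℚ) :
    (L.sub B).qbilin a c
      = L.qbilin (a ᵥ* B.map ((↑) : ℤ → ℚ)) (c ᵥ* B.map ((↑) : ℤ → ℚ)) := by
  simp_rw [qbilin_vecMul_left, qbilin_comm L _ (c ᵥ* _), qbilin_vecMul_row]
  rfl

lemma bilin_vecMul_vecMul (B : Matrix (Fin r) (Fin L.rank) ℤ) (c d : Fin r → ℤ) :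
    L.bilin (c ᵥ* B) (d ᵥ* B) = c ⬝ᵥ (L.gramOf B *ᵥ d) := by
  have h := L.sub_qbilin B (castVec c) (castVec d)
  rw [← castVec_vecMul, ← castVec_vecMul, qbilin_castVec] at h
  have h' : (L.bilin (c ᵥ* B) (d ᵥ* B) : ℚ) = ((L.sub B).bilin c d : ℤ) :=
    h.symm.trans ((L.sub B).qbilin_castVec c d)
  exact_mod_cast h'

lemma bilin_self_eq_of_castVec_eq_add {BP : Matrix (Fin r) (Fin L.rank) ℤ}
    {BQ : Matrix (Fin r') (Fin L.rank) ℤ} (hPQ : ∀ i j, L.bilin (BP i) (BQ j) = 0)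
    {x : Fin L.rank → ℤ} {a : Fin r → ℚ} {b : Fin r' → ℚ}
    (h : castVec x = a ᵥ* BP.map ((↑) : ℤ → ℚ) + b ᵥ* BQ.map ((↑) : ℤ → ℚ)) :
    (L.bilin x x : ℚ) = (L.sub BP).qbilin a a + (L.sub BQ).qbilin b b := by
  rw [← qbilin_castVec, h, qbilin_add_left, qbilin_add_right, qbilin_add_right, sub_qbilin,
    sub_qbilin, L.qbilin_vecMul_vecMul_eq_zero hPQ, qbilin_comm L (b ᵥ* _),
    L.qbilin_vecMul_vecMul_eq_zero hPQ]
  ring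

lemma mem_dualSub_of_castVec_eq_add {BP : Matrix (Fin r) (Fin L.rank) ℤ}
    {BQ : Matrix (Fin r') (Fin L.rank) ℤ} (hPQ : ∀ i j, L.bilin (BP i) (BQ j) = 0)
    {x : Fin L.rank → ℤ} {a : Fin r → ℚ} {b : Fin r' → ℚ}
    (h : castVec x = a ᵥ* BP.map ((↑) : ℤ → ℚ) + b ᵥ* BQ.map ((↑) : ℤ → ℚ)) :
    b ∈ (L.sub BQ).dualSub := fun (c : Fin r' → ℤ) => by
  refine ⟨L.bilin x (c ᵥ* BQ), (L.sub_qbilin BQ b (castVec c)).trans ?_⟩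
  rw [← qbilin_castVec, castVec_vecMul, eq_sub_of_add_eq' h.symm, qbilin_sub_left,
    L.qbilin_vecMul_vecMul_eq_zero hPQ, sub_zero]

lemma det_gramOf_ne_zero {P : Submodule ℤ (Fin L.rank → ℤ)} {B : Matrix (Fin r) (Fin L.rank) ℤ}
    (hB : IsBasisOf P B) (hnd : ∀ x ∈ P, (∀ y ∈ P, L.bilin x y = 0) → x = 0) :
    (L.gramOf B).det ≠ 0 := by
  intro hdet
  obtain ⟨c, hc0, hc⟩ := exists_mulVec_eq_zero_iff.2 hdet
  refine hc0 (hB.eq_zero_of_vecMul_eq_zero (hnd _ (vecMul_mem_of_forall_row_mem hB.1 c) ?_))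
  rintro y hy
  obtain ⟨d, rfl, -⟩ := hB.2 y hy
  rw [bilin_comm, bilin_vecMul_vecMul, hc, dotProduct_zero]

lemma isUnit_gramOf_map {B : Matrix (Fin r) (Fin L.rank) ℤ} (hdet : (L.gramOf B).det ≠ 0) :
    IsUnit ((L.gramOf B).map ((↑) : ℤ → ℚ)) := by
  rw [isUnit_iff_isUnit_det, isUnit_iff_ne_zero, ← Int.cast_det]
  exact_mod_cast hdet

lemma exists_qbilin_row_eq {B : Matrix (Fin r) (Fin L.rank) ℤ} (hdet : (L.gramOf B).det ≠ 0)
    (f : Fin r → ℚ) : ∃ a, ∀ i, L.qbilin (a ᵥ* B.map ((↑) : ℤ → ℚ)) (castVec (B i)) = f i := by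
  obtain ⟨a, ha⟩ := mulVec_surjective_iff_isUnit.2 (L.isUnit_gramOf_map hdet) f
  exact ⟨a, fun i => by rw [qbilin_vecMul_row, ha]⟩

lemma eq_of_qbilin_row_eq {B : Matrix (Fin r) (Fin L.rank) ℤ} (hdet : (L.gramOf B).det ≠ 0)
    {a a' : Fin r → ℚ} (h : ∀ i, L.qbilin (a ᵥ* B.map ((↑) : ℤ → ℚ)) (castVec (B i))
      = L.qbilin (a' ᵥ* B.map ((↑) : ℤ → ℚ)) (castVec (B i))) : a = a' :=
  mulVec_injective_iff_isUnit.2 (L.isUnit_gramOf_map hdet) <| funext fun i => by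
    rw [← qbilin_vecMul_row, ← qbilin_vecMul_row, h]

lemma eq_zero_of_forall_bilin_eq_zero (hdet : L.gram.det ≠ 0) {z : Fin L.rank → ℤ}
    (hz : ∀ x, L.bilin z x = 0) : z = 0 := by
  refine eq_zero_of_mulVec_eq_zero hdet (funext fun i => ?_)
  have h := hz (Pi.single i 1)
  rwa [L.bilin_comm, bilin, single_dotProduct, one_mul] at h

lemma exists_bilin_eq (hu : L.IsUnimodular) (g : (Fin L.rank → ℤ) →+ ℚ)
    (hg : ∀ z, ∃ m : ℤ, g z = m) : ∃ x, ∀ z, (L.bilin x z : ℚ) = g z := by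
  classical
  choose d hd using hg
  refine ⟨L.gram⁻¹ *ᵥ fun i => d fun j => if i = j then 1 else 0, fun z => ?_⟩
  have hg := g.toIntLinearMap.pi_apply_eq_sum_univ z
  simp only [AddMonoidHom.coe_toIntLinearMap] at hg
  rw [L.bilin_comm, bilin, mulVec_mulVec, mul_nonsing_inv _ hu, one_mulVec, hg]
  simp [dotProduct, hd]

lemma exists_bilin_eq_qbilin_of_mem_dualSub (hu : L.IsUnimodular)
    {P : Submodule ℤ (Fin L.rank → ℤ)} {B : Matrix (Fin r) (Fin L.rank) ℤ} (hB : IsBasisOf P B)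
    (hP : IsPrimitiveSubmodule P) {u : Fin r → ℚ} (hu_dual : u ∈ (L.sub B).dualSub) :
    ∃ x, ∀ s ∈ P, (L.bilin x s : ℚ) = L.qbilin (u ᵥ* B.map ((↑) : ℤ → ℚ)) (castVec s) := by
  obtain ⟨π, hπP, hπ⟩ := hP.exists_projection
  -- extend `⟨u, ·⟩ : P → ℤ` to `L` through a projection onto the direct summand `P`
  let g : (Fin L.rank → ℤ) →+ ℚ :=
    AddMonoidHom.mk' (fun z => L.qbilin (u ᵥ* B.map ((↑) : ℤ → ℚ)) (castVec (π z)))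
      fun y z => by rw [map_add, castVec_add, qbilin_add_right]
  obtain ⟨x, hx⟩ := L.exists_bilin_eq hu g fun z => by
    obtain ⟨c, hc, -⟩ := hB.2 (π z) (hπP z)
    obtain ⟨m, hm⟩ := hu_dual c
    refine ⟨m, Eq.trans ?_ ((L.sub_qbilin B u (castVec c)).symm.trans hm)⟩
    show L.qbilin _ (castVec (π z)) = _
    rw [hc, castVec_vecMul]
  refine ⟨x, fun s hs => ?_⟩
  rw [hx]
  show L.qbilin _ (castVec (π s)) = _
  rw [hπ s hs]

/-- The pairs `(u, v) ∈ P∨ × Q∨` with `u·BP + v·BQ ∈ L`; for `Q = P^⊥` this is the image of `L`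
under `x ↦ (x_P, x_Q)`. -/
def glueSubgroup (BP : Matrix (Fin r) (Fin L.rank) ℤ) (BQ : Matrix (Fin r') (Fin L.rank) ℤ) :
    AddSubgroup ((L.sub BP).dualSub × (L.sub BQ).dualSub) :=
  L.latticeIn.comap <|
    ((vecMulLinear (BP.map ((↑) : ℤ → ℚ))).toAddMonoidHom.comp (L.sub BP).dualSub.subtype).coprod
      ((vecMulLinear (BQ.map ((↑) : ℤ → ℚ))).toAddMonoidHom.comp (L.sub BQ).dualSub.subtype)

lemma mem_glueSubgroup {BP : Matrix (Fin r) (Fin L.rank) ℤ}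
    {BQ : Matrix (Fin r') (Fin L.rank) ℤ} {p : (L.sub BP).dualSub × (L.sub BQ).dualSub} :
    p ∈ L.glueSubgroup BP BQ ↔ ∃ x, castVec x =
      (p.1 : Fin (L.sub BP).rank → ℚ) ᵥ* BP.map ((↑) : ℤ → ℚ)
        + (p.2 : Fin (L.sub BQ).rank → ℚ) ᵥ* BQ.map ((↑) : ℤ → ℚ) :=
  Iff.rfl

lemma mk_zero_mem_glueSubgroup_iff {P : Submodule ℤ (Fin L.rank → ℤ)}
    {BP : Matrix (Fin r) (Fin L.rank) ℤ} (BQ : Matrix (Fin r') (Fin L.rank) ℤ)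
    (hBP : IsBasisOf P BP) (hP : IsPrimitiveSubmodule P) (u : (L.sub BP).dualSub) :
    (u, 0) ∈ L.glueSubgroup BP BQ ↔ u ∈ (L.sub BP).latticeIn.addSubgroupOf (L.sub BP).dualSub := by
  have h0 : (0 : Fin (L.sub BQ).rank → ℚ) ᵥ* BQ.map ((↑) : ℤ → ℚ) = 0 := zero_vecMul _
  rw [mem_glueSubgroup, AddSubgroup.mem_addSubgroupOf, ZeroMemClass.coe_zero, h0, add_zero]
  constructor
  · rintro ⟨x, hx⟩
    exact hBP.exists_castVec_eq hP hx
  · rintro ⟨c, hc⟩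
    exact ⟨c ᵥ* BP, (castVec_vecMul c BP).trans (congrArg (· ᵥ* _) hc)⟩

lemma swap_mem_glueSubgroup {BP : Matrix (Fin r) (Fin L.rank) ℤ}
    {BQ : Matrix (Fin r') (Fin L.rank) ℤ} {p : (L.sub BP).dualSub × (L.sub BQ).dualSub} :
    p.swap ∈ L.glueSubgroup BQ BP ↔ p ∈ L.glueSubgroup BP BQ := by
  simp only [mem_glueSubgroup, Prod.fst_swap, Prod.snd_swap, add_comm]

lemma exists_partner (hu : L.IsUnimodular) {P : Submodule ℤ (Fin L.rank → ℤ)}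
    {BP : Matrix (Fin r) (Fin L.rank) ℤ} {BQ : Matrix (Fin r') (Fin L.rank) ℤ}
    (hBP : IsBasisOf P BP) (hP : IsPrimitiveSubmodule P) (hdetP : (L.gramOf BP).det ≠ 0)
    (hPQ : ∀ i j, L.bilin (BP i) (BQ j) = 0)
    (hdecomp : ∀ w, ∃ a b, w = a ᵥ* BP.map ((↑) : ℤ → ℚ) + b ᵥ* BQ.map ((↑) : ℤ → ℚ))
    (u : (L.sub BP).dualSub) : ∃ v, (u, v) ∈ L.glueSubgroup BP BQ := by
  obtain ⟨x, hx⟩ := L.exists_bilin_eq_qbilin_of_mem_dualSub hu hBP hP u.2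
  obtain ⟨a, b, hab⟩ := hdecomp (castVec x)
  have hau : a = u.1 := L.eq_of_qbilin_row_eq hdetP fun i => by
    have h := hx (BP i) (hBP.1 i)
    rwa [← qbilin_castVec, hab, qbilin_add_left,
      L.qbilin_vecMul_castVec_eq_zero (B := BQ) (fun j => by rw [bilin_comm, hPQ]), add_zero] at h
  exact ⟨⟨b, L.mem_dualSub_of_castVec_eq_add hPQ hab⟩, x, hau ▸ hab⟩

lemma perpOfSet_isPrimitive (X : Set (Fin L.rank → ℤ)) : IsPrimitiveSubmodule (perpOfSet L X) :=
  fun m x hm hmx s hs => by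
    have h : m * L.bilin x s = 0 := by rw [bilin, ← smul_eq_mul, ← smul_dotProduct]; exact hmx s hs
    exact (mul_eq_zero.1 h).resolve_left hm

lemma mem_perpOfSet_of_forall_row {P : Submodule ℤ (Fin L.rank → ℤ)}
    {B : Matrix (Fin r) (Fin L.rank) ℤ} (hB : IsBasisOf P B) {z : Fin L.rank → ℤ}
    (hz : ∀ i, L.bilin z (B i) = 0) : z ∈ perpOfSet L P := by
  intro s hs
  obtain ⟨c, rfl, -⟩ := hB.2 s hs
  have h := L.qbilin_vecMul_castVec_eq_zero (fun i => by rw [bilin_comm]; exact hz i) (castVec c)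
  rw [← castVec_vecMul, qbilin_castVec, bilin_comm] at h
  exact_mod_cast h

section Perp

variable {S : Submodule ℤ (Fin L.rank → ℤ)} {BS : Matrix (Fin r) (Fin L.rank) ℤ}
  {BT : Matrix (Fin r') (Fin L.rank) ℤ}

lemma exists_eq_vecMul_of_qbilin_row_eq_zero (hBS : IsBasisOf S BS)
    (hBT : IsBasisOf (perpOfSet L S) BT) {w : Fin L.rank → ℚ}
    (hw : ∀ i, L.qbilin w (castVec (BS i)) = 0) : ∃ b, w = b ᵥ* BT.map ((↑) : ℤ → ℚ) := by
  obtain ⟨m, hm, z, hz⟩ := exists_smul_eq_castVec w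
  have hzS : z ∈ perpOfSet L S := L.mem_perpOfSet_of_forall_row hBS fun i => by
    have h : (L.bilin z (BS i) : ℚ) = m * L.qbilin w (castVec (BS i)) := by
      rw [← qbilin_castVec, ← hz, qbilin_smul_left]
    rw [hw, mul_zero] at h
    exact_mod_cast h
  obtain ⟨c, hc, -⟩ := hBT.2 z hzS
  refine ⟨(m : ℚ)⁻¹ • castVec c, ?_⟩
  rw [smul_vecMul, ← castVec_vecMul, ← hc, ← hz, smul_smul,
    inv_mul_cancel₀ (Int.cast_ne_zero.2 hm), one_smul]

lemma exists_decomposition (hBS : IsBasisOf S BS) (hdetS : (L.gramOf BS).det ≠ 0)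
    (hBT : IsBasisOf (perpOfSet L S) BT) (w : Fin L.rank → ℚ) :
    ∃ a b, w = a ᵥ* BS.map ((↑) : ℤ → ℚ) + b ᵥ* BT.map ((↑) : ℤ → ℚ) := by
  obtain ⟨a, ha⟩ := L.exists_qbilin_row_eq hdetS fun i => L.qbilin w (castVec (BS i))
  obtain ⟨b, hb⟩ := L.exists_eq_vecMul_of_qbilin_row_eq_zero hBS hBT
    (w := w - a ᵥ* BS.map ((↑) : ℤ → ℚ)) fun i => by rw [qbilin_sub_left, ha, sub_self]
  exact ⟨a, b, by rw [← hb, add_sub_cancel]⟩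

lemma perpOfSet_nondegenerate (hdet : L.gram.det ≠ 0) (hBS : ∀ i, BS i ∈ S)
    (hBT : ∀ j, BT j ∈ perpOfSet L S)
    (hdecomp : ∀ w, ∃ a b, w = a ᵥ* BS.map ((↑) : ℤ → ℚ) + b ᵥ* BT.map ((↑) : ℤ → ℚ)) :
    ∀ t ∈ perpOfSet L S, (∀ t' ∈ perpOfSet L S, L.bilin t t' = 0) → t = 0 := by
  intro t ht htT
  refine L.eq_zero_of_forall_bilin_eq_zero hdet fun x => ?_
  obtain ⟨a, b, hab⟩ := hdecomp (castVec x)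
  have h : L.qbilin (castVec x) (castVec t) = 0 := by
    rw [hab, qbilin_add_left,
      L.qbilin_vecMul_castVec_eq_zero (fun i => by rw [bilin_comm]; exact ht _ (hBS i)),
      L.qbilin_vecMul_castVec_eq_zero (fun j => by rw [bilin_comm]; exact htT _ (hBT j)),
      add_zero]
  rw [qbilin_castVec, bilin_comm] at h
  exact_mod_cast h

end Perp

end IntLattice

/-- For a primitive nondegenerate sublattice `S` of an even
unimodular lattice `L`, with `T = S^⊥`, the projections of `L` to `S⊗ℚ` and `T⊗ℚ`
land in the dual lattices, and the image of `L` in `A_S ⊕ A_T` is the graph of an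
isomorphism `γ : A_S → A_T` with `q_T ∘ γ = -q_S`. -/
theorem gluing_isomorphism (L : IntLattice) (hev : L.IsEven) (hu : L.IsUnimodular)
    (S : Submodule ℤ (Fin L.rank → ℤ))
    (hprim : ∀ (m : ℤ) (x : Fin L.rank → ℤ), m ≠ 0 → m • x ∈ S → x ∈ S)
    (hnd : ∀ x ∈ S, (∀ y ∈ S, L.bilin x y = 0) → x = 0)
    (rs rt : ℕ)
    (BS : Matrix (Fin rs) (Fin L.rank) ℤ) (BT : Matrix (Fin rt) (Fin L.rank) ℤ)
    (hBS : IsBasisOf S BS)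
    (hBT : IsBasisOf (perpOfSet L (S : Set (Fin L.rank → ℤ))) BT) :
    ∃ γ : (L.sub BS).discGroup ≃+ (L.sub BT).discGroup,
      IntLattice.QFormIsoNeg (L.sub BS) (L.sub BT) γ ∧
      (∀ x : Fin L.rank → ℤ,
        ∃ (u : (L.sub BS).dualSub) (v : (L.sub BT).dualSub),
          castVec x =
            Matrix.vecMul (u : Fin (IntLattice.sub L BS).rank → ℚ) (BS.map ((↑) : ℤ → ℚ)) +
            Matrix.vecMul (v : Fin (IntLattice.sub L BT).rank → ℚ) (BT.map ((↑) : ℤ → ℚ)) ∧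
          γ ((L.sub BS).dmk u) = (L.sub BT).dmk v) ∧
      (∀ (u : (L.sub BS).dualSub) (v : (L.sub BT).dualSub),
        γ ((L.sub BS).dmk u) = (L.sub BT).dmk v →
        ∃ x : Fin L.rank → ℤ,
          castVec x =
            Matrix.vecMul (u : Fin (IntLattice.sub L BS).rank → ℚ) (BS.map ((↑) : ℤ → ℚ)) +
            Matrix.vecMul (v : Fin (IntLattice.sub L BT).rank → ℚ) (BT.map ((↑) : ℤ → ℚ))) := by
  have hST : ∀ i j, L.bilin (BS i) (BT j) = 0 := fun i j => by
    rw [L.bilin_comm]; exact hBT.1 j (BS i) (hBS.1 i)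
  have hTS : ∀ j i, L.bilin (BT j) (BS i) = 0 := fun j i => hBT.1 j (BS i) (hBS.1 i)
  have hprimT := L.perpOfSet_isPrimitive (S : Set (Fin L.rank → ℤ))
  have hdetS := L.det_gramOf_ne_zero hBS hnd
  have hdecomp := L.exists_decomposition hBS hdetS hBT
  have hdecomp' : ∀ w, ∃ b a, w = b ᵥ* BT.map ((↑) : ℤ → ℚ) + a ᵥ* BS.map ((↑) : ℤ → ℚ) :=
    fun w => let ⟨a, b, h⟩ := hdecomp w; ⟨b, a, h.trans (add_comm _ _)⟩
  have hdetT := L.det_gramOf_ne_zero hBT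
    (L.perpOfSet_nondegenerate hu.ne_zero hBS.1 hBT.1 hdecomp)
  have hS := L.exists_partner hu hBS hprim hdetS hST hdecomp
  obtain ⟨γ, hγ⟩ := AddSubgroup.exists_addEquiv_quotient_of_graph (L.glueSubgroup BS BT) hS
    (fun v => (L.exists_partner hu hBT hprimT hdetT hTS hdecomp' v).imp
      fun _ => L.swap_mem_glueSubgroup.1)
    (L.mk_zero_mem_glueSubgroup_iff BT hBS hprim)
    (fun v => L.swap_mem_glueSubgroup.symm.trans
      (L.mk_zero_mem_glueSubgroup_iff BS hBT hprimT v))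
  refine ⟨γ, fun u => ?_, fun x => ?_, fun u v h => (hγ u v).1 h⟩
  · obtain ⟨v, hv⟩ := hS u
    obtain ⟨x, hx⟩ := L.mem_glueSubgroup.1 hv
    obtain ⟨m, hm⟩ := hev x
    refine ⟨v, ((hγ u v).2 hv).symm, m, ?_⟩
    rw [add_comm, ← L.bilin_self_eq_of_castVec_eq_add hST hx, hm]
    push_cast
    ring
  · obtain ⟨a, b, hab⟩ := hdecomp (castVec x)
    have hba : castVec x = b ᵥ* BT.map ((↑) : ℤ → ℚ) + a ᵥ* BS.map ((↑) : ℤ → ℚ) :=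
      hab.trans (add_comm _ _)
    exact ⟨⟨a, L.mem_dualSub_of_castVec_eq_add hTS hba⟩,
      ⟨b, L.mem_dualSub_of_castVec_eq_add hST hab⟩, hab, (hγ _ _).2 ⟨x, hab⟩⟩
end
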